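/- arXiv:2512.19385 — 8 statements merged into one kernel-verified Lean document; each statement's English description precedes it below -/
import Mathlib

section
/- Let A be a commutative semisimple complex Banach algebra belonging to the class NP∞, let K be a subset of the Gelfand space Δ(A), and let I(K) = {x ∈ A : φ(x) = 0 for all φ ∈ K}, a closed ideal of A. Then for all pairwise distinct characters φ₁,…,φₙ ∈ K and every (a₁,…,aₙ) ∈ ℂⁿ, the Nevanlinna–Pick norm of the quotient algebra satisfies inf{‖x + I(K)‖_{A/I(K)} : x ∈ A, φᵢ(x) = aᵢ for all i ∈ {1,…,n}} = max₁≤i≤n |aᵢ|, where ‖x + I(K)‖_{A/I(K)} = inf{‖x + y‖_A : y ∈ I(K)} is the quotient norm. -/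
open WeakDual

/-- A commutative (not necessarily unital) complex Banach algebra `A` belongs to the
class `NP∞` if every Nevanlinna–Pick norm is the supremum norm. -/
def MemNPInfty (A : Type*) [NonUnitalNormedCommRing A] [NormedSpace ℂ A] : Prop :=
  ∀ (n : ℕ) (φ : Fin n → characterSpace ℂ A), Function.Injective φ →
    ∀ a : Fin n → ℂ,
      sInf {r : ℝ | ∃ x : A, (∀ i, φ i x = a i) ∧ ‖x‖ = r} = ⨆ i, ‖a i‖

/-- Characters of a (possibly non-unital) complex Banach algebra are contractive. -/
lemma char_norm_le {A : Type*} [NonUnitalNormedCommRing A] [NormedSpace ℂ A]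
    (ψ : characterSpace ℂ A) (z : A) : ‖ψ z‖ ≤ ‖z‖ := by
  by_contra h
  push_neg at h
  have hψz : ψ z ≠ 0 := by
    intro h0
    rw [h0, norm_zero] at h
    exact absurd h (not_lt.mpr (norm_nonneg z))
  set w : A := (ψ z)⁻¹ • z with hw
  have hψw : ψ w = 1 := by
    simp [hw, map_smul, smul_eq_mul, inv_mul_cancel₀ hψz]
  have hwlt : ‖w‖ < 1 := by
    rw [hw, norm_smul, norm_inv]
    rw [inv_mul_lt_iff₀ (norm_pos_iff.mpr hψz), mul_one]
    exact h
  let zseq : ℕ → A := fun k => Nat.rec w (fun _ u => w * u) k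
  have hψseq : ∀ k, ψ (zseq k) = 1 := by
    intro k
    induction k with
    | zero => exact hψw
    | succ k ih =>
      have : ψ (zseq (k + 1)) = ψ w * ψ (zseq k) := map_mul ψ w (zseq k)
      rw [this, hψw, ih, one_mul]
  have hnorm : ∀ k, ‖zseq k‖ ≤ ‖w‖ ^ (k + 1) := by
    intro k
    induction k with
    | zero => show ‖w‖ ≤ ‖w‖ ^ (0 + 1); rw [pow_one]
    | succ k ih =>
      calc ‖zseq (k + 1)‖ = ‖w * zseq k‖ := rfl
        _ ≤ ‖w‖ * ‖zseq k‖ := norm_mul_le _ _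
        _ ≤ ‖w‖ * ‖w‖ ^ (k + 1) := mul_le_mul_of_nonneg_left ih (norm_nonneg w)
        _ = ‖w‖ ^ (k + 2) := by ring
  have htend : Filter.Tendsto zseq Filter.atTop (nhds 0) := by
    have h1 : Filter.Tendsto (fun k : ℕ => ‖w‖ ^ (k + 1)) Filter.atTop (nhds 0) := by
      have := tendsto_pow_atTop_nhds_zero_of_lt_one (norm_nonneg w) hwlt
      exact this.comp (Filter.tendsto_add_atTop_nat 1)
    rw [tendsto_zero_iff_norm_tendsto_zero]
    exact squeeze_zero (fun k => norm_nonneg _) hnorm h1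
  have hcont : Filter.Tendsto (fun k => ψ (zseq k)) Filter.atTop (nhds (ψ 0)) :=
    (map_continuous ψ).continuousAt.tendsto.comp htend
  rw [map_zero] at hcont
  have h10 : (0 : ℂ) = 1 :=
    tendsto_nhds_unique (hcont.congr hψseq) tendsto_const_nhds
  exact one_ne_zero h10.symm

/-- Let `A ∈ NP∞` be a commutative semisimple complex Banach algebra,
`K ⊆ Δ(A)`, and `I(K) = {x : φ x = 0 for all φ ∈ K}`.  Then for all pairwise distinct
characters `φ₁, …, φₙ ∈ K` and all `(a₁, …, aₙ) ∈ ℂⁿ`, the Nevanlinna–Pick norm of the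
quotient algebra `A / I(K)` satisfies
`inf {‖x + I(K)‖ : φᵢ x = aᵢ for all i} = maxᵢ |aᵢ|`, where the quotient norm is
`‖x + I(K)‖ = inf {‖x + y‖ : y ∈ I(K)}`. -/
theorem statement3 (A : Type*) [NonUnitalNormedCommRing A] [NormedSpace ℂ A]
    [IsScalarTower ℂ A A] [SMulCommClass ℂ A A] [CompleteSpace A]
    (hsemi : ∀ x : A, x ≠ 0 → ∃ φ : characterSpace ℂ A, φ x ≠ 0)
    (hNP : MemNPInfty A)
    (K : Set (characterSpace ℂ A))
    (n : ℕ) (φ : Fin n → characterSpace ℂ A) (hφK : ∀ i, φ i ∈ K)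
    (hφ : Function.Injective φ) (a : Fin n → ℂ) :
    sInf {r : ℝ | ∃ x : A, (∀ i, φ i x = a i) ∧
        sInf {s : ℝ | ∃ y : A, (∀ ψ ∈ K, ψ y = 0) ∧ ‖x + y‖ = s} = r}
      = ⨆ i, ‖a i‖ := by
  set q : A → ℝ := fun x => sInf {s : ℝ | ∃ y : A, (∀ ψ ∈ K, ψ y = 0) ∧ ‖x + y‖ = s}
    with hq
  set S : Set ℝ := {r : ℝ | ∃ x : A, (∀ i, φ i x = a i) ∧ q x = r} with hS
  set T : Set ℝ := {r : ℝ | ∃ x : A, (∀ i, φ i x = a i) ∧ ‖x‖ = r} with hT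
  -- basic facts about the inner sets
  have hmem : ∀ x : A, ‖x‖ ∈ {s : ℝ | ∃ y : A, (∀ ψ ∈ K, ψ y = 0) ∧ ‖x + y‖ = s} := by
    intro x
    exact ⟨0, fun ψ _ => map_zero ψ, by rw [add_zero]⟩
  have hbdd : ∀ x : A, BddBelow {s : ℝ | ∃ y : A, (∀ ψ ∈ K, ψ y = 0) ∧ ‖x + y‖ = s} := by
    intro x
    exact ⟨0, fun s ⟨y, _, hy⟩ => hy ▸ norm_nonneg _⟩
  have hq_le : ∀ x : A, q x ≤ ‖x‖ := fun x => csInf_le (hbdd x) (hmem x)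
  have hq_nonneg : ∀ x : A, 0 ≤ q x := by
    intro x
    exact le_csInf ⟨_, hmem x⟩ (fun s ⟨y, _, hy⟩ => hy ▸ norm_nonneg _)
  have hq_ge : ∀ x : A, (∀ i, φ i x = a i) → ∀ i, ‖a i‖ ≤ q x := by
    intro x hx i
    refine le_csInf ⟨_, hmem x⟩ ?_
    rintro s ⟨y, hy0, rfl⟩
    calc ‖a i‖ = ‖φ i (x + y)‖ := by
          rw [map_add, hy0 (φ i) (hφK i), add_zero, hx i]
      _ ≤ ‖x + y‖ := char_norm_le _ _
  -- the supremum is nonnegative and bounds each coordinate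
  have hsup_nonneg : 0 ≤ ⨆ i, ‖a i‖ := Real.iSup_nonneg fun i => norm_nonneg _
  have hle_sup : ∀ i, ‖a i‖ ≤ ⨆ i, ‖a i‖ := fun i =>
    le_ciSup (f := fun i => ‖a i‖) (Set.Finite.bddAbove (Set.finite_range _)) i
  -- T is nonempty
  have hTne : T.Nonempty := by
    by_contra hTne
    rw [Set.not_nonempty_iff_eq_empty] at hTne
    have h0 : sInf T = 0 := by rw [hTne]; exact Real.sInf_empty
    have hNP' := hNP n φ hφ a
    rw [← hT] at hNP'
    have hsup0 : (⨆ i, ‖a i‖) = 0 := by rw [← hNP', h0]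
    have ha0 : ∀ i, a i = 0 := by
      intro i
      have := hle_sup i
      rw [hsup0] at this
      exact norm_eq_zero.mp (le_antisymm this (norm_nonneg _))
    have : ‖(0 : A)‖ ∈ T := ⟨0, fun i => by rw [map_zero, ha0 i], rfl⟩
    rw [hTne] at this
    exact this
  have hTne' := hTne
  obtain ⟨r₀, x₀, hx₀, _⟩ := hTne'
  have hSne : S.Nonempty := ⟨q x₀, x₀, hx₀, rfl⟩
  have hSbdd : BddBelow S := ⟨0, fun r ⟨x, _, hx⟩ => hx ▸ hq_nonneg x⟩
  have hTbdd : BddBelow T := ⟨0, fun r ⟨x, _, hx⟩ => hx ▸ norm_nonneg x⟩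
  refine le_antisymm ?_ ?_
  · -- sInf S ≤ ⨆ i, ‖a i‖
    refine le_of_forall_pos_le_add ?_
    intro ε hε
    obtain ⟨r, ⟨x, hx, hxr⟩, hrlt⟩ := Real.lt_sInf_add_pos hTne hε
    have hNP' := hNP n φ hφ a
    rw [← hT] at hNP'
    have h1 : sInf S ≤ q x := csInf_le hSbdd ⟨x, hx, rfl⟩
    have h2 : q x ≤ ‖x‖ := hq_le x
    have h3 : ‖x‖ < sInf T + ε := hxr ▸ hrlt
    linarith [hNP']
  · -- ⨆ ≤ sInf S
    refine le_csInf hSne ?_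
    rintro r ⟨x, hx, rfl⟩
    exact Real.iSup_le (fun i => hq_ge x hx i) (hq_nonneg x)
end

section
/- Let A be a commutative semisimple complex Banach algebra whose Gelfand space Δ(A) is homeomorphic to the ordinal interval [0,γ]; identify Δ(A) with [0,γ] and write x̂(t) for t ∈ [0,γ]. Let (γ_m)_{m∈ℕ} be a strictly increasing sequence of ordinals with γ_m < γ for all m and sup_m γ_m = γ. Assume that for every N ∈ ℕ, every continuous function g : [0,γ_N] ∪ {γ} → ℂ (subspace topology), and every ε > 0 there exists x ∈ A with x̂(t) = g(t) for all t ∈ [0,γ_N] ∪ {γ} and ‖x‖_A < sup_{t ∈ [0,γ_N]∪{γ}} |g(t)| + ε. Then for every n ∈ ℕ, every δ > 0, every ε > 0, and every continuous ψ : [0,γ_n] → ℂ with sup_{t ≤ γ_n} |ψ(t)| ≤ 1, there exist N ∈ ℕ with N > n and h ∈ A such that ‖h‖_A < 1 + ε, ĥ(t) = ψ(t) for all t ∈ [0,γ_n], ĥ(t) = 0 for all t with γ_n < t ≤ γ_N, and |ĥ(t)| < δ for all t with γ_N < t ≤ γ. -/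
open WeakDual



lemma charNormLe {A : Type*} [NonUnitalNormedCommRing A] [NormedSpace ℂ A]
    [IsScalarTower ℂ A A] [SMulCommClass ℂ A A]
    (φ : characterSpace ℂ A) (a : A) : ‖φ a‖ ≤ ‖a‖ := by
  by_contra hc
  push_neg at hc
  set b : ℕ → A := fun k => Nat.rec a (fun _ c => a * c) k with hb
  have hφb : ∀ k, φ (b k) = (φ a) ^ (k + 1) := by
    intro k; induction k with
    | zero => simp [hb]
    | succ k ih =>
        have : b (k+1) = a * b k := rfl
        rw [this, map_mul, ih, ← pow_succ']
  have hnb : ∀ k, ‖b k‖ ≤ ‖a‖ ^ (k + 1) := by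
    intro k; induction k with
    | zero => simp [hb]
    | succ k ih =>
        calc ‖b (k+1)‖ = ‖a * b k‖ := rfl
        _ ≤ ‖a‖ * ‖b k‖ := norm_mul_le _ _
        _ ≤ ‖a‖ * ‖a‖ ^ (k+1) := by gcongr
        _ = ‖a‖ ^ (k + 2) := (pow_succ' _ _).symm
  set C := ‖(WeakDual.toStrongDual (φ : WeakDual ℂ A))‖ with hC
  have hC0 : 0 ≤ C := norm_nonneg _
  have key : ∀ k : ℕ, ‖φ a‖ ^ (k+1) ≤ C * ‖a‖ ^ (k+1) := by
    intro k
    have h1 : ‖(WeakDual.toStrongDual (φ : WeakDual ℂ A)) (b k)‖ ≤ C * ‖b k‖ :=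
      ContinuousLinearMap.le_opNorm _ _
    have h2 : (WeakDual.toStrongDual (φ : WeakDual ℂ A)) (b k) = φ (b k) := rfl
    rw [h2, hφb, norm_pow] at h1
    calc ‖φ a‖ ^ (k+1) ≤ C * ‖b k‖ := h1
    _ ≤ C * ‖a‖ ^ (k+1) := by gcongr; exact hnb k
  have hr0 : 0 < ‖φ a‖ := lt_of_le_of_lt (norm_nonneg a) hc
  rcases eq_or_lt_of_le (norm_nonneg a) with hs0 | hs0
  · have h := key 0
    rw [pow_one, pow_one, ← hs0, mul_zero] at h
    linarith
  · have hdiv : 1 < ‖φ a‖ / ‖a‖ := (one_lt_div hs0).2 hc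
    have htend : Filter.Tendsto (fun k : ℕ => (‖φ a‖ / ‖a‖) ^ k) Filter.atTop Filter.atTop :=
      tendsto_pow_atTop_atTop_of_one_lt hdiv
    obtain ⟨k0, hk0⟩ := (htend.eventually_gt_atTop C).exists_forall_of_atTop
    have h3 := hk0 (k0 + 1) (Nat.le_succ _)
    have h4 : (‖φ a‖ / ‖a‖) ^ (k0 + 1) ≤ C := by
      rw [div_pow, div_le_iff₀ (pow_pos hs0 _)]
      exact key k0
    linarith

lemma statement5_aux_clopen (γ c : Ordinal) :
    IsClopen {t : Set.Iic γ | (t : Ordinal) ≤ c} := by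
  constructor
  · exact isClosed_Iic.preimage continuous_subtype_val
  · have h : {t : Set.Iic γ | (t : Ordinal) ≤ c} =
        (Subtype.val : Set.Iic γ → Ordinal) ⁻¹' (Set.Iio (c + 1)) := by
      ext t
      simp [Order.lt_add_one_iff]
    rw [h]
    exact isOpen_Iio.preimage continuous_subtype_val

section Aux

open scoped Classical

variable {A : Type*} [NonUnitalNormedCommRing A] [NormedSpace ℂ A]
    [IsScalarTower ℂ A A] [SMulCommClass ℂ A A]

lemma statement5_aux_eval (γ : Ordinal) (E : Set.Iic γ ≃ₜ characterSpace ℂ A) (x : A) :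
    Continuous fun t : Set.Iic γ => (E t) x := by
  have h1 : Continuous fun φ : characterSpace ℂ A => φ x :=
    (WeakDual.eval_continuous x).comp continuous_subtype_val
  exact h1.comp E.continuous

end Aux

/-- Let `A` be a commutative semisimple complex Banach algebra whose
Gelfand space is (homeomorphic to) the ordinal interval `[0, γ]`, via a homeomorphism
`E`, and let `(γ_m)` be a strictly increasing sequence of ordinals below `γ` with
supremum `γ`.  Assume that every continuous function on `[0, γ_N] ∪ {γ}` can be
interpolated by an element of `A` of norm less than its sup norm plus `ε`.  Then for
all `n`, `δ > 0`, `ε > 0` and continuous `ψ : [0, γ_n] → ℂ` with `‖ψ‖_∞ ≤ 1`, there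
are `N > n` and `h ∈ A` with `‖h‖ < 1 + ε`, `ĥ = ψ` on `[0, γ_n]`, `ĥ = 0` on
`(γ_n, γ_N]` and `|ĥ| < δ` on `(γ_N, γ]`. -/
theorem statement5 (A : Type*) [NonUnitalNormedCommRing A] [NormedSpace ℂ A]
    [IsScalarTower ℂ A A] [SMulCommClass ℂ A A] [CompleteSpace A]
    (hsemi : ∀ x : A, x ≠ 0 → ∃ φ : characterSpace ℂ A, φ x ≠ 0)
    (γ : Ordinal) (E : Set.Iic γ ≃ₜ characterSpace ℂ A)
    (γm : ℕ → Ordinal) (hmono : StrictMono γm) (hlt : ∀ m, γm m < γ)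
    (hsup : (⨆ m, γm m) = γ)
    (hinterp : ∀ (N : ℕ)
        (g : C({t : Set.Iic γ // (t : Ordinal) ≤ γm N ∨ (t : Ordinal) = γ}, ℂ))
        (ε : ℝ), 0 < ε →
        ∃ x : A, (∀ t, E t.1 x = g t) ∧ ‖x‖ < (⨆ t, ‖g t‖) + ε) :
    ∀ (n : ℕ) (δ ε : ℝ), 0 < δ → 0 < ε →
      ∀ ψ : C(Set.Iic (γm n), ℂ), (∀ t, ‖ψ t‖ ≤ 1) →
        ∃ (N : ℕ) (h : A), n < N ∧ ‖h‖ < 1 + ε ∧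
          (∀ (t : Set.Iic γ) (ht : (t : Ordinal) ≤ γm n), E t h = ψ ⟨(t : Ordinal), ht⟩) ∧
          (∀ t : Set.Iic γ, γm n < (t : Ordinal) → (t : Ordinal) ≤ γm N → E t h = 0) ∧
          (∀ t : Set.Iic γ, γm N < (t : Ordinal) → ‖E t h‖ < δ) := by
  classical
  intro n δ ε hδ hε ψ hψ
  -- choice of a small auxiliary ε
  set α : ℝ := min (ε / 3) (1 / 2) with hα
  have hα0 : 0 < α := lt_min (by linarith) (by norm_num)
  have hα1 : α ≤ ε / 3 := min_le_left _ _
  have hα2 : α ≤ 1 / 2 := min_le_right _ _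
  -- the clopen set [0, γm n]
  have hclopen := statement5_aux_clopen γ (γm n)
  -- extension of ψ to all of [0, γ]
  set Ψ : Set.Iic γ → ℂ := fun t =>
    if (t : Ordinal) ≤ γm n then ψ ⟨min (t : Ordinal) (γm n), Set.mem_Iic.mpr (min_le_right _ _)⟩ else 0 with hΨdef
  have contΨ : Continuous Ψ := by
    apply Continuous.if
    · intro a ha
      rw [hclopen.frontier_eq] at ha
      exact absurd ha (Set.notMem_empty a)
    · exact ψ.continuous.comp
        (Continuous.subtype_mk (continuous_subtype_val.min continuous_const) _)
    · exact continuous_const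
  have Ψeq : ∀ (t : Set.Iic γ) (ht : (t : Ordinal) ≤ γm n), Ψ t = ψ ⟨(t : Ordinal), ht⟩ := by
    intro t ht
    have h1 : (⟨min (t : Ordinal) (γm n), Set.mem_Iic.mpr (min_le_right _ _)⟩ : Set.Iic (γm n)) =
        ⟨(t : Ordinal), ht⟩ := Subtype.ext (min_eq_left ht)
    simp only [hΨdef, if_pos ht, h1]
  have Ψ0 : ∀ t : Set.Iic γ, γm n < (t : Ordinal) → Ψ t = 0 := fun t ht => by
    simp only [hΨdef, if_neg (not_le.2 ht)]
  have Ψbd : ∀ t, ‖Ψ t‖ ≤ 1 := by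
    intro t
    by_cases h : (t : Ordinal) ≤ γm n
    · rw [hΨdef]; simp only [if_pos h]; exact hψ _
    · rw [hΨdef]; simp only [if_neg h, norm_zero]; norm_num
  -- first interpolation : x with x̂ = ψ on [0, γm n] and x̂(γ) = 0
  haveI hne1 : Nonempty {t : Set.Iic γ // (t : Ordinal) ≤ γm n ∨ (t : Ordinal) = γ} :=
    ⟨⟨⟨γ, Set.mem_Iic.mpr le_rfl⟩, Or.inr rfl⟩⟩
  set g₁ : C({t : Set.Iic γ // (t : Ordinal) ≤ γm n ∨ (t : Ordinal) = γ}, ℂ) :=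
    ⟨fun t => Ψ t.1, contΨ.comp continuous_subtype_val⟩ with hg₁
  obtain ⟨x, hx1, hx2⟩ := hinterp n g₁ α hα0
  have hsupg₁ : (⨆ t, ‖g₁ t‖) ≤ 1 := ciSup_le fun t => Ψbd _
  have hxnorm : ‖x‖ < 1 + α := by
    calc ‖x‖ < (⨆ t, ‖g₁ t‖) + α := hx2
    _ ≤ 1 + α := by linarith
  have hxψ : ∀ (t : Set.Iic γ) (ht : (t : Ordinal) ≤ γm n),
      E t x = ψ ⟨(t : Ordinal), ht⟩ := by
    intro t ht
    have := hx1 ⟨t, Or.inl ht⟩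
    rwa [hg₁, ContinuousMap.coe_mk, Ψeq t ht] at this
  have hxγ : E ⟨γ, Set.mem_Iic.mpr le_rfl⟩ x = 0 := by
    have := hx1 ⟨⟨γ, Set.mem_Iic.mpr le_rfl⟩, Or.inr rfl⟩
    rwa [hg₁, ContinuousMap.coe_mk, Ψ0 _ (hlt n)] at this
  -- γ is a limit ordinal; find M with ‖x̂‖ < δ/2 beyond γm M
  have hlt' : ∀ a, a < γ → ∃ m, a < γm m := by
    intro a ha
    rw [← hsup] at ha
    exact (lt_ciSup_iff (Ordinal.bddAbove_range _)).1 ha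
  have hγlim : Order.IsSuccLimit γ := by
    refine Ordinal.isSuccLimit_iff.2 ⟨?_, Order.isSuccPrelimit_of_succ_lt ?_⟩
    · exact ((zero_le : (0 : Ordinal) ≤ γm 0).trans_lt (hlt 0)).ne'
    · intro a ha
      obtain ⟨m, hm⟩ := hlt' a ha
      exact lt_of_le_of_lt (Order.succ_le_of_lt hm) (hlt m)
  have htail : ∃ m : ℕ, ∀ t : Set.Iic γ, γm m < (t : Ordinal) → ‖E t x‖ < δ / 2 := by
    have hopen : IsOpen {t : Set.Iic γ | ‖E t x‖ < δ / 2} := by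
      have : Continuous fun t : Set.Iic γ => ‖E t x‖ :=
        (statement5_aux_eval γ E x).norm
      exact isOpen_lt this continuous_const
    obtain ⟨W, hWopen, hWpre⟩ := isOpen_induced_iff.1 hopen
    have hγW : γ ∈ W := by
      have : (⟨γ, Set.mem_Iic.mpr le_rfl⟩ : Set.Iic γ) ∈ {t : Set.Iic γ | ‖E t x‖ < δ / 2} := by
        simp only [Set.mem_setOf_eq, hxγ, norm_zero]; linarith
      rw [← hWpre] at this
      exact this
    obtain ⟨a, haγ, haW⟩ := (Ordinal.isOpen_iff.1 hWopen) γ hγW hγlim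
    obtain ⟨m, hm⟩ := hlt' a haγ
    refine ⟨m, fun t ht => ?_⟩
    rcases eq_or_lt_of_le (Set.mem_Iic.mp t.2) with htγ | htγ
    · have ht' : t = ⟨γ, Set.mem_Iic.mpr le_rfl⟩ := Subtype.ext htγ
      rw [ht', hxγ, norm_zero]; linarith
    · have : (t : Ordinal) ∈ W := haW ⟨lt_trans hm ht, htγ⟩
      have : t ∈ {t : Set.Iic γ | ‖E t x‖ < δ / 2} := by
        rw [← hWpre]; exact this
      exact this
  obtain ⟨m, hm⟩ := htail
  set M : ℕ := max m (n + 1) with hM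
  have hnM : n < M := lt_of_lt_of_le (Nat.lt_succ_self n) (le_max_right _ _)
  have hmM : γm m ≤ γm M := hmono.monotone (le_max_left _ _)
  have htailM : ∀ t : Set.Iic γ, γm M < (t : Ordinal) → ‖E t x‖ < δ / 2 :=
    fun t ht => hm t (lt_of_le_of_lt hmM ht)
  -- second interpolation : e with ê = 1 on [0, γm n], ê = 0 on (γm n, γm M] ∪ {γ}
  set Efun : Set.Iic γ → ℂ := fun t => if (t : Ordinal) ≤ γm n then 1 else 0 with hEdef
  have contE : Continuous Efun := by
    apply Continuous.if
    · intro a ha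
      rw [hclopen.frontier_eq] at ha
      exact absurd ha (Set.notMem_empty a)
    · exact continuous_const
    · exact continuous_const
  haveI hne2 : Nonempty {t : Set.Iic γ // (t : Ordinal) ≤ γm M ∨ (t : Ordinal) = γ} :=
    ⟨⟨⟨γ, Set.mem_Iic.mpr le_rfl⟩, Or.inr rfl⟩⟩
  set g₂ : C({t : Set.Iic γ // (t : Ordinal) ≤ γm M ∨ (t : Ordinal) = γ}, ℂ) :=
    ⟨fun t => Efun t.1, contE.comp continuous_subtype_val⟩ with hg₂
  obtain ⟨e, he1, he2⟩ := hinterp M g₂ α hα0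
  have hsupg₂ : (⨆ t, ‖g₂ t‖) ≤ 1 := by
    refine ciSup_le fun t => ?_
    by_cases h : (t.1 : Ordinal) ≤ γm n
    · rw [hg₂]; simp only [ContinuousMap.coe_mk, hEdef, if_pos h, norm_one]; exact le_rfl
    · rw [hg₂]; simp only [ContinuousMap.coe_mk, hEdef, if_neg h, norm_zero]; norm_num
  have henorm : ‖e‖ < 1 + α := by
    calc ‖e‖ < (⨆ t, ‖g₂ t‖) + α := he2
    _ ≤ 1 + α := by linarith
  have he1' : ∀ (t : Set.Iic γ), (t : Ordinal) ≤ γm M →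
      E t e = if (t : Ordinal) ≤ γm n then 1 else 0 := by
    intro t ht
    exact he1 ⟨t, Or.inl ht⟩
  -- the element h = x * e
  refine ⟨M, x * e, hnM, ?_, ?_, ?_, ?_⟩
  · -- norm bound
    have h1 : ‖x * e‖ ≤ ‖x‖ * ‖e‖ := norm_mul_le _ _
    have h2 : ‖x‖ * ‖e‖ < (1 + α) * (1 + α) :=
      mul_lt_mul'' hxnorm henorm (norm_nonneg _) (norm_nonneg _)
    nlinarith
  · -- equals ψ on [0, γm n]
    intro t ht
    have hmul : E t (x * e) = (E t x) * (E t e) := map_mul (E t) x e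
    have htM : (t : Ordinal) ≤ γm M := le_trans ht (hmono.monotone hnM.le)
    rw [hmul, he1' t htM, if_pos ht, mul_one, hxψ t ht]
  · -- zero on (γm n, γm M]
    intro t ht1 ht2
    have hmul : E t (x * e) = (E t x) * (E t e) := map_mul (E t) x e
    rw [hmul, he1' t ht2, if_neg (not_le.2 ht1), mul_zero]
  · -- small beyond γm M
    intro t ht
    have hmul : E t (x * e) = (E t x) * (E t e) := map_mul (E t) x e
    rw [hmul, norm_mul]
    have h1 : ‖E t x‖ < δ / 2 := htailM t ht
    have h2 : ‖E t e‖ ≤ ‖e‖ := charNormLe _ _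
    have h3 : ‖E t e‖ ≤ 3 / 2 := h2.trans (by linarith)
    calc ‖E t x‖ * ‖E t e‖ ≤ (δ / 2) * (3 / 2) :=
      mul_le_mul h1.le h3 (norm_nonneg _) (by linarith)
    _ < δ := by linarith
end

section
/- Let A be a commutative semisimple complex Banach algebra whose Gelfand space Δ(A) is homeomorphic to the ordinal interval [0,γ]; identify Δ(A) with [0,γ] and write x̂(t) for t ∈ [0,γ]. Let (γ_m)_{m∈ℕ} be a strictly increasing sequence of ordinals with γ_m < γ for all m and sup_m γ_m = γ. Assume that for every n ∈ ℕ, every δ > 0, every ε > 0, and every continuous ψ : [0,γ_n] → ℂ with sup_{t ≤ γ_n} |ψ(t)| ≤ 1, there exist N ∈ ℕ with N > n and h ∈ A with ‖h‖_A < 1 + ε such that ĥ(t) = ψ(t) for t ∈ [0,γ_n], ĥ(t) = 0 for γ_n < t ≤ γ_N, and |ĥ(t)| < δ for γ_N < t ≤ γ. Then for every n ∈ ℕ and every continuous ψ : [0,γ_n] → ℂ with sup_{t ≤ γ_n} |ψ(t)| ≤ 1, there exists h ∈ A with ‖h‖_A ≤ 1 such that ĥ(t) = ψ(t) for all t ∈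 [0,γ_n] and ĥ(t) = 0 for all t with γ_n < t ≤ γ. -/
open WeakDual
open Filter Topology

private lemma char_apply_norm_le {A : Type*} [NonUnitalNormedCommRing A] [NormedSpace ℂ A]
    [IsScalarTower ℂ A A] [SMulCommClass ℂ A A]
    (φ : characterSpace ℂ A) (x : A) : ‖φ x‖ ≤ ‖x‖ := by
  obtain ⟨C, hC0, hC⟩ : ∃ C : ℝ, 0 < C ∧ ∀ y : A, ‖φ y‖ ≤ C * ‖y‖ := by
    have hcont : Continuous (φ : A → ℂ) := map_continuous φ
    have h0 : ContinuousAt (φ : A → ℂ) 0 := hcont.continuousAt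
    rw [Metric.continuousAt_iff] at h0
    obtain ⟨δ, hδ, hball⟩ := h0 1 one_pos
    refine ⟨2/δ, by positivity, fun y => ?_⟩
    rcases eq_or_ne y 0 with rfl | hy
    · simp
    · have hyn : 0 < ‖y‖ := norm_pos_iff.mpr hy
      have hzlt : dist (((δ/2 / ‖y‖ : ℝ) : ℂ) • y) 0 < δ := by
        rw [dist_zero_right, norm_smul, Complex.norm_real, Real.norm_eq_abs,
          abs_of_pos (by positivity)]
        have he : ‖y‖ * (δ / 2 / ‖y‖) = δ/2 := by field_simp
        rw [mul_comm, he]; linarith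
      have hb := hball hzlt
      rw [map_zero, dist_zero_right, map_smul, norm_smul, Complex.norm_real, Real.norm_eq_abs,
        abs_of_pos (by positivity : (0:ℝ) < δ/2/‖y‖)] at hb
      rw [div_div, div_mul_eq_mul_div, div_lt_one (by positivity)] at hb
      rw [div_mul_eq_mul_div, le_div_iff₀ hδ]
      nlinarith
  let p : ℕ → A := fun k => Nat.rec x (fun _ y => y * x) k
  have hφp : ∀ k, φ (p k) = (φ x) ^ (k+1) := by
    intro k; induction k with
    | zero => simp [p]
    | succ k ih =>
      have h1 : p (k+1) = p k * x := rfl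
      rw [h1, map_mul, ih]; ring
  have hnp : ∀ k, ‖p k‖ ≤ ‖x‖ ^ (k+1) := by
    intro k; induction k with
    | zero => simp [p]
    | succ k ih =>
      have h1 : p (k+1) = p k * x := rfl
      rw [h1, pow_succ]
      exact le_trans (norm_mul_le _ _) (mul_le_mul_of_nonneg_right ih (norm_nonneg x))
  have key : ∀ k, ‖φ x‖ ^ (k+1) ≤ C * ‖x‖ ^ (k+1) := by
    intro k
    calc ‖φ x‖ ^ (k+1) = ‖(φ x)^(k+1)‖ := (norm_pow _ _).symm
      _ = ‖φ (p k)‖ := by rw [hφp]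
      _ ≤ C * ‖p k‖ := hC _
      _ ≤ C * ‖x‖ ^ (k+1) := mul_le_mul_of_nonneg_left (hnp k) hC0.le
  by_contra hcon
  push_neg at hcon
  rcases eq_or_lt_of_le (norm_nonneg x) with hx0 | hx0
  · have hx : x = 0 := norm_eq_zero.mp hx0.symm
    simp [hx] at hcon
  · set r : ℝ := ‖φ x‖ / ‖x‖ with hr
    have hr1 : 1 < r := (one_lt_div hx0).mpr hcon
    obtain ⟨k, hk⟩ := pow_unbounded_of_one_lt C hr1
    have h2 : r ^ (k+1) ≤ C := by
      have hkey := key k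
      rw [hr, div_pow, div_le_iff₀ (by positivity)]
      exact hkey
    have h3 : r ^ k ≤ r ^ (k+1) := pow_le_pow_right₀ (le_of_lt hr1) (Nat.le_succ k)
    linarith

private lemma ordinal_isOpen_Iic (c : Ordinal) : IsOpen (Set.Iic c) := by
  have h : Set.Iic c = Set.Iio (c+1) := by
    ext o; simp only [Set.mem_Iic, Set.mem_Iio]; rw [Ordinal.add_one_eq_succ, Order.lt_succ_iff]
  rw [h]; exact isOpen_Iio

/-- Let `A` be a commutative semisimple complex Banach algebra whose
Gelfand space is (homeomorphic to) the ordinal interval `[0, γ]`, via a homeomorphism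
`E`, and let `(γ_m)` be a strictly increasing sequence of ordinals below `γ` with
supremum `γ`.  Assume that for all `n`, `δ > 0`, `ε > 0` and continuous
`ψ : [0, γ_n] → ℂ` with `‖ψ‖_∞ ≤ 1` there are `N > n` and `h ∈ A` with `‖h‖ < 1 + ε`,
`ĥ = ψ` on `[0, γ_n]`, `ĥ = 0` on `(γ_n, γ_N]` and `|ĥ| < δ` on `(γ_N, γ]`.  Then for
every `n` and continuous `ψ : [0, γ_n] → ℂ` with `‖ψ‖_∞ ≤ 1` there is `h ∈ A` with
`‖h‖ ≤ 1`, `ĥ = ψ` on `[0, γ_n]` and `ĥ = 0` on `(γ_n, γ]`. -/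
theorem statement6 (A : Type*) [NonUnitalNormedCommRing A] [NormedSpace ℂ A]
    [IsScalarTower ℂ A A] [SMulCommClass ℂ A A] [CompleteSpace A]
    (hsemi : ∀ x : A, x ≠ 0 → ∃ φ : characterSpace ℂ A, φ x ≠ 0)
    (γ : Ordinal) (E : Set.Iic γ ≃ₜ characterSpace ℂ A)
    (γm : ℕ → Ordinal) (hmono : StrictMono γm) (hlt : ∀ m, γm m < γ)
    (hsup : (⨆ m, γm m) = γ)
    (hyp : ∀ (n : ℕ) (δ ε : ℝ), 0 < δ → 0 < ε →
      ∀ ψ : C(Set.Iic (γm n), ℂ), (∀ t, ‖ψ t‖ ≤ 1) →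
        ∃ (N : ℕ) (h : A), n < N ∧ ‖h‖ < 1 + ε ∧
          (∀ (t : Set.Iic γ) (ht : (t : Ordinal) ≤ γm n), E t h = ψ ⟨(t : Ordinal), ht⟩) ∧
          (∀ t : Set.Iic γ, γm n < (t : Ordinal) → (t : Ordinal) ≤ γm N → E t h = 0) ∧
          (∀ t : Set.Iic γ, γm N < (t : Ordinal) → ‖E t h‖ < δ)) :
    ∀ (n : ℕ) (ψ : C(Set.Iic (γm n), ℂ)), (∀ t, ‖ψ t‖ ≤ 1) →
      ∃ h : A, ‖h‖ ≤ 1 ∧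
        (∀ (t : Set.Iic γ) (ht : (t : Ordinal) ≤ γm n), E t h = ψ ⟨(t : Ordinal), ht⟩) ∧
        (∀ t : Set.Iic γ, γm n < (t : Ordinal) → E t h = 0) := by
  intro n ψ hψ
  classical
  set γtop : Set.Iic γ := ⟨γ, le_refl γ⟩ with hγtopdef
  have hγn : γm n < γ := hlt n
  set F : Set.Iic γ → ℂ :=
    fun t => if h : (t : Ordinal) ≤ γm n then ψ ⟨(t : Ordinal), h⟩ else 0 with hFdef
  have hF_le : ∀ (t : Set.Iic γ) (ht : (t : Ordinal) ≤ γm n), F t = ψ ⟨(t : Ordinal), ht⟩ := by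
    intro t ht; rw [hFdef]; exact dif_pos ht
  have hF_gt : ∀ t : Set.Iic γ, γm n < (t : Ordinal) → F t = 0 := by
    intro t ht; rw [hFdef]; exact dif_neg (not_le.mpr ht)
  have hFγ : F γtop = 0 := hF_gt _ hγn
  -- continuity of evaluation
  have hEval : ∀ x : A, Continuous fun t : Set.Iic γ => (E t) x := fun x =>
    (WeakDual.eval_continuous x).comp (continuous_subtype_val.comp E.continuous)
  -- continuity of F
  have hFcont : Continuous F := by
    have hmin : Continuous fun t : Set.Iic γ =>
        ψ ⟨min (t : Ordinal) (γm n), Set.mem_Iic.mpr (min_le_right _ _)⟩ :=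
      ψ.continuous.comp ((continuous_subtype_val.min continuous_const).subtype_mk _)
    rw [continuous_iff_continuousAt]
    intro t
    rcases le_or_gt (t : Ordinal) (γm n) with h | h
    · apply hmin.continuousAt.congr
      have hopen : IsOpen {s : Set.Iic γ | (s : Ordinal) ≤ γm n} :=
        (ordinal_isOpen_Iic (γm n)).preimage continuous_subtype_val
      filter_upwards [hopen.mem_nhds h] with s hs
      rw [hF_le s hs]
      exact congrArg ψ (Subtype.ext (min_eq_left hs))
    · apply continuousAt_const.congr
      have hopen : IsOpen {s : Set.Iic γ | γm n < (s : Ordinal)} :=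
        isOpen_Ioi.preimage continuous_subtype_val
      filter_upwards [hopen.mem_nhds h] with s hs
      exact (hF_gt s hs).symm
  -- tail smallness from continuity at γ
  have tail_small : ∀ x : A, (E γtop) x = 0 → ∀ η : ℝ, 0 < η →
      ∃ m : ℕ, ∀ t : Set.Iic γ, γm m < (t : Ordinal) → ‖(E t) x‖ ≤ η := by
    intro x hx η hη
    have hU : IsOpen {t : Set.Iic γ | ‖(E t) x‖ < η} :=
      isOpen_lt (hEval x).norm continuous_const
    obtain ⟨V, hVopen, hVeq⟩ := isOpen_induced_iff.mp hU
    have hγV : γ ∈ V := by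
      have hmem : γtop ∈ {t : Set.Iic γ | ‖(E t) x‖ < η} := by
        simp only [Set.mem_setOf_eq, hx, norm_zero]; exact hη
      rw [← hVeq] at hmem; exact hmem
    obtain ⟨l, hlγ, hIoc⟩ := exists_Ioc_subset_of_mem_nhds (hVopen.mem_nhds hγV) ⟨γm 0, hlt 0⟩
    have hex : ∃ m, l < γm m := by
      by_contra hcon; push_neg at hcon
      have : γ ≤ l := by rw [← hsup]; exact ciSup_le hcon
      exact absurd hlγ (not_lt.mpr this)
    obtain ⟨m, hm⟩ := hex
    refine ⟨m, fun t ht => ?_⟩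
    have h1 : (t : Ordinal) ∈ Set.Ioc l γ := ⟨hm.trans ht, t.2⟩
    have h2 : t ∈ {t : Set.Iic γ | ‖(E t) x‖ < η} := by
      rw [← hVeq]; exact hIoc h1
    exact le_of_lt h2
  -- the unit-at-γ element
  obtain ⟨a₀, ha₀⟩ : ∃ a₀ : A, (E γtop) a₀ ≠ 0 := by
    by_contra hcon; push_neg at hcon
    have hne : (E γtop : WeakDual ℂ A) ≠ 0 := (E γtop).2.1
    apply hne
    apply DFunLike.ext
    intro x
    exact (hcon x).trans rfl
  set aU : A := ((E γtop) a₀)⁻¹ • a₀ with haUdef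
  have haU : (E γtop) aU = 1 := by
    rw [haUdef, map_smul, smul_eq_mul, inv_mul_cancel₀ ha₀]
  set M : ℝ := ‖aU‖ with hMdef
  have hMt : ∀ t : Set.Iic γ, ‖(E t) aU‖ ≤ M := fun t => char_apply_norm_le _ _
  have hM1 : 1 ≤ M := by
    have h1 := hMt γtop; rw [haU] at h1; simpa using h1
  have hM0 : 0 < 1 + M := by linarith
  -- main approximation lemma
  have main : ∀ ε : ℝ, 0 < ε → ∃ H : A, ‖H‖ ≤ 1 + ε ∧ ∀ t, (E t) H = F t := by
    intro ε hε
    set Cst : ℝ := 3*M + 2 with hCstdef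
    have hCst0 : 0 < Cst := by rw [hCstdef]; linarith
    set μ₁ : ℝ := ε / (4*Cst) with hμ₁def
    have hμ₁0 : 0 < μ₁ := by rw [hμ₁def]; positivity
    set μ : ℕ → ℝ := fun ℓ => μ₁ * (1/2)^ℓ with hμdef
    have hμpos : ∀ ℓ, 0 < μ ℓ := fun ℓ => by rw [hμdef]; positivity
    have hμsucc : ∀ ℓ, μ (ℓ+1) = μ ℓ / 2 := by
      intro ℓ; rw [hμdef]; simp [pow_succ]; ring
    -- one improvement step
    have step : ∀ (ℓ : ℕ) (S : A), (∀ t, ‖(E t) S - F t‖ ≤ μ ℓ) →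
        ∃ S' : A, (∀ t, ‖(E t) S' - F t‖ ≤ μ (ℓ+1)) ∧ ‖S' - S‖ ≤ Cst * μ ℓ := by
      intro ℓ S hresS
      set c : ℂ := - (E γtop) S with hcdef
      have hcμ : ‖c‖ ≤ μ ℓ := by
        have h1 := hresS γtop; rw [hFγ, sub_zero] at h1
        rw [hcdef, norm_neg]; exact h1
      set x' : A := S + c • aU with hx'def
      have hx'γ : (E γtop) x' = 0 := by
        rw [hx'def, map_add, map_smul, haU, smul_eq_mul, mul_one, hcdef]; ring
      obtain ⟨m₀, hm₀⟩ := tail_small x' hx'γ (μ ℓ / 8) (by positivity)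
      set m : ℕ := max m₀ n with hmdef
      have hγmm : ∀ t : Set.Iic γ, γm m < (t : Ordinal) → ‖(E t) x'‖ ≤ μ ℓ / 8 := by
        intro t ht
        refine hm₀ t (lt_of_le_of_lt ?_ ht)
        exact hmono.monotone (le_max_left m₀ n)
      have hγnm : γm n ≤ γm m := hmono.monotone (le_max_right m₀ n)
      set σ : ℝ := μ ℓ * (1 + M) with hσdef
      have hσ0 : 0 < σ := by rw [hσdef]; positivity
      have hGb : ∀ t : Set.Iic γ, ‖F t - (E t) x'‖ ≤ σ := by
        intro t
        rw [hx'def, map_add, map_smul, smul_eq_mul]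
        have h1 : F t - ((E t) S + c * (E t) aU) = (F t - (E t) S) - c * (E t) aU := by ring
        rw [h1]
        calc ‖(F t - (E t) S) - c * (E t) aU‖
            ≤ ‖F t - (E t) S‖ + ‖c * (E t) aU‖ := norm_sub_le _ _
          _ ≤ μ ℓ + μ ℓ * M := by
              have h2 : ‖F t - (E t) S‖ ≤ μ ℓ := by rw [norm_sub_rev]; exact hresS t
              have h3 : ‖c * (E t) aU‖ ≤ μ ℓ * M := by
                rw [norm_mul]
                exact mul_le_mul hcμ (hMt t) (norm_nonneg _) (hμpos ℓ).le
              linarith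
          _ = σ := by rw [hσdef]; ring
      -- the correction function
      have hψvcont : Continuous fun t : Set.Iic (γm m) =>
          ((σ : ℂ))⁻¹ * (F ⟨(t : Ordinal), t.2.trans (hlt m).le⟩ -
            (E ⟨(t : Ordinal), t.2.trans (hlt m).le⟩) x') := by
        have hincl : Continuous fun t : Set.Iic (γm m) =>
            (⟨(t : Ordinal), t.2.trans (hlt m).le⟩ : Set.Iic γ) :=
          continuous_subtype_val.subtype_mk _
        exact continuous_const.mul ((hFcont.comp hincl).sub ((hEval x').comp hincl))
      set ψv : C(Set.Iic (γm m), ℂ) := ⟨_, hψvcont⟩ with hψvdef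
      have hψvb : ∀ t, ‖ψv t‖ ≤ 1 := by
        intro t
        show ‖((σ : ℂ))⁻¹ * (F _ - (E _) x')‖ ≤ 1
        rw [norm_mul, norm_inv, Complex.norm_real, Real.norm_eq_abs, abs_of_pos hσ0]
        rw [inv_mul_le_iff₀ hσ0, mul_one]
        exact hGb _
      obtain ⟨N, w, hNm, hwnorm, hwex, hwmid, hwfar⟩ :=
        hyp m (1/(8*(1+M))) 1 (by positivity) one_pos ψv hψvb
      refine ⟨x' + (σ : ℂ) • w, ?_, ?_⟩
      · intro t
        rcases le_or_gt (t : Ordinal) (γm m) with h1 | h1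
        · have he := hwex t h1
          have hval : (E t) ((σ : ℂ) • w) = F t - (E t) x' := by
            rw [map_smul, smul_eq_mul, he]
            show (σ : ℂ) * (((σ : ℂ))⁻¹ * (F _ - (E _) x')) = _
            rw [← mul_assoc, mul_inv_cancel₀ (by exact_mod_cast hσ0.ne'), one_mul]
          rw [map_add, hval]
          have h2 : (E t) x' + (F t - (E t) x') - F t = 0 := by ring
          rw [h2, norm_zero]
          exact (hμpos (ℓ+1)).le
        · have hFt : F t = 0 := hF_gt t (lt_of_le_of_lt hγnm h1)
          have h2 : ‖(E t) ((σ : ℂ) • w)‖ ≤ μ ℓ / 8 := by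
            rw [map_smul, smul_eq_mul, norm_mul, Complex.norm_real, Real.norm_eq_abs,
              abs_of_pos hσ0]
            rcases le_or_gt (t : Ordinal) (γm N) with h3 | h3
            · rw [hwmid t h1 h3, norm_zero, mul_zero]; positivity
            · have h4 := (hwfar t h3).le
              calc σ * ‖(E t) w‖ ≤ σ * (1/(8*(1+M))) :=
                    mul_le_mul_of_nonneg_left h4 hσ0.le
                _ = μ ℓ / 8 := by rw [hσdef]; field_simp
          calc ‖(E t) (x' + (σ : ℂ) • w) - F t‖
              = ‖(E t) x' + (E t) ((σ : ℂ) • w)‖ := by rw [map_add, hFt, sub_zero]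
            _ ≤ ‖(E t) x'‖ + ‖(E t) ((σ : ℂ) • w)‖ := norm_add_le _ _
            _ ≤ μ ℓ / 8 + μ ℓ / 8 := add_le_add (hγmm t h1) h2
            _ ≤ μ (ℓ+1) := by rw [hμsucc ℓ]; linarith [(hμpos ℓ).le]
      · have hdiff : x' + (σ : ℂ) • w - S = c • aU + (σ : ℂ) • w := by
          rw [hx'def]; abel
        rw [hdiff]
        have hw2 : ‖w‖ ≤ 2 := by linarith
        calc ‖c • aU + (σ : ℂ) • w‖ ≤ ‖c • aU‖ + ‖(σ : ℂ) • w‖ := norm_add_le _ _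
          _ ≤ μ ℓ * M + σ * 2 := by
              have hb1 : ‖c • aU‖ ≤ μ ℓ * M := by
                have h5 := norm_smul c aU
                rw [h5, ← hMdef]
                exact mul_le_mul hcμ (le_refl M) (by linarith) (hμpos ℓ).le
              have hb2 : ‖(σ : ℂ) • w‖ ≤ σ * 2 := by
                have h6 := norm_smul ((σ : ℝ) : ℂ) w
                rw [h6, Complex.norm_real, Real.norm_eq_abs, abs_of_pos hσ0]
                exact mul_le_mul_of_nonneg_left hw2 hσ0.le
              linarith
          _ = Cst * μ ℓ := by rw [hCstdef, hσdef]; ring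
    -- initial element
    obtain ⟨S₀, hS₀res, hS₀norm⟩ :
        ∃ S₀ : A, (∀ t, ‖(E t) S₀ - F t‖ ≤ μ 0) ∧ ‖S₀‖ ≤ 1 + ε/2 := by
      obtain ⟨N, h, hN, hnorm, hex, hmid, hfar⟩ :=
        hyp n μ₁ (ε/2) hμ₁0 (half_pos hε) ψ hψ
      have hμ0 : μ 0 = μ₁ := by rw [hμdef]; simp
      refine ⟨h, fun t => ?_, hnorm.le⟩
      rw [hμ0]
      rcases le_or_gt (t : Ordinal) (γm n) with h1 | h1
      · rw [hex t h1, hF_le t h1, sub_self, norm_zero]; exact hμ₁0.le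
      · rw [hF_gt t h1, sub_zero]
        rcases le_or_gt (t : Ordinal) (γm N) with h2 | h2
        · rw [hmid t h1 h2, norm_zero]; exact hμ₁0.le
        · exact (hfar t h2).le
    -- build the sequence
    choose f hf1 hf2 using step
    let T : (ℓ : ℕ) → {x : A // ∀ t, ‖(E t) x - F t‖ ≤ μ ℓ} := fun ℓ =>
      Nat.rec (motive := fun ℓ => {x : A // ∀ t, ‖(E t) x - F t‖ ≤ μ ℓ})
        ⟨S₀, hS₀res⟩ (fun k ih => ⟨f k ih.1 ih.2, hf1 k ih.1 ih.2⟩) ℓ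
    set Sq : ℕ → A := fun ℓ => (T ℓ).1 with hSqdef
    have hres : ∀ ℓ t, ‖(E t) (Sq ℓ) - F t‖ ≤ μ ℓ := fun ℓ => (T ℓ).2
    have hdist : ∀ ℓ, ‖Sq (ℓ+1) - Sq ℓ‖ ≤ Cst * μ ℓ := by
      intro ℓ
      have h1 : Sq (ℓ+1) = f ℓ (Sq ℓ) (T ℓ).2 := rfl
      rw [h1]
      exact hf2 ℓ (T ℓ).1 (T ℓ).2
    have hcauchy : CauchySeq Sq := by
      apply cauchySeq_of_le_geometric (1/2) (Cst * μ₁) (by norm_num)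
      intro ℓ
      rw [dist_eq_norm, norm_sub_rev]
      calc ‖Sq (ℓ+1) - Sq ℓ‖ ≤ Cst * μ ℓ := hdist ℓ
        _ = Cst * μ₁ * (1/2)^ℓ := by rw [hμdef]; ring
    obtain ⟨H, hH⟩ := cauchySeq_tendsto_of_complete hcauchy
    have hμto0 : Tendsto μ atTop (nhds 0) := by
      rw [hμdef]
      have h1 : Tendsto (fun ℓ : ℕ => (1/2 : ℝ)^ℓ) atTop (nhds 0) :=
        tendsto_pow_atTop_nhds_zero_of_lt_one (by norm_num) (by norm_num)
      simpa using h1.const_mul μ₁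
    have hHF : ∀ t, (E t) H = F t := by
      intro t
      have h1 : Tendsto (fun ℓ => (E t) (Sq ℓ)) atTop (nhds ((E t) H)) :=
        ((map_continuous (E t)).tendsto H).comp hH
      have h2 : Tendsto (fun ℓ => (E t) (Sq ℓ)) atTop (nhds (F t)) := by
        rw [tendsto_iff_norm_sub_tendsto_zero]
        exact squeeze_zero (fun ℓ => norm_nonneg _) (fun ℓ => hres ℓ t) hμto0
      exact tendsto_nhds_unique h1 h2
    have hnormb : ∀ ℓ, ‖Sq ℓ‖ ≤ 1 + ε/2 + 2*Cst*μ₁*(1 - (1/2)^ℓ) := by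
      intro ℓ; induction ℓ with
      | zero => show ‖S₀‖ ≤ _; simpa using hS₀norm
      | succ ℓ ih =>
        have h1 : ‖Sq (ℓ+1)‖ ≤ ‖Sq ℓ‖ + Cst * μ ℓ := by
          calc ‖Sq (ℓ+1)‖ = ‖Sq ℓ + (Sq (ℓ+1) - Sq ℓ)‖ := by rw [add_sub_cancel]
            _ ≤ ‖Sq ℓ‖ + ‖Sq (ℓ+1) - Sq ℓ‖ := norm_add_le _ _
            _ ≤ ‖Sq ℓ‖ + Cst * μ ℓ := by linarith [hdist ℓ]
        have h2 : 2*Cst*μ₁*(1 - (1/2)^(ℓ+1)) = 2*Cst*μ₁*(1 - (1/2)^ℓ) + Cst * μ ℓ := by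
          rw [hμdef]; simp only [pow_succ]; ring
        calc ‖Sq (ℓ+1)‖ ≤ ‖Sq ℓ‖ + Cst * μ ℓ := h1
          _ ≤ (1 + ε/2 + 2*Cst*μ₁*(1 - (1/2)^ℓ)) + Cst * μ ℓ := by linarith [ih]
          _ = 1 + ε/2 + 2*Cst*μ₁*(1 - (1/2)^(ℓ+1)) := by rw [h2]; ring
    have hHn : ‖H‖ ≤ 1 + ε := by
      have h1 : Tendsto (fun ℓ => ‖Sq ℓ‖) atTop (nhds ‖H‖) := hH.norm
      apply le_of_tendsto' h1
      intro ℓ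
      have h2 := hnormb ℓ
      have h3 : 2*Cst*μ₁ = ε/2 := by
        rw [hμ₁def]; field_simp; ring
      have h4 : (0:ℝ) ≤ (1/2)^ℓ := by positivity
      have h5 : (1/2:ℝ)^ℓ ≤ 1 := by
        apply pow_le_one₀ <;> norm_num
      nlinarith
    exact ⟨H, hHn, hHF⟩
  -- conclude via uniqueness (semisimplicity)
  obtain ⟨H, hHn, hHF⟩ := main 1 one_pos
  have hH1 : ‖H‖ ≤ 1 := by
    apply le_of_forall_pos_le_add
    intro ε hε
    obtain ⟨H', hH'n, hH'F⟩ := main ε hε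
    have hEq : H = H' := by
      by_contra hne
      obtain ⟨φ, hφ⟩ := hsemi (H - H') (sub_ne_zero.mpr hne)
      apply hφ
      have hφE : φ = E (E.symm φ) := (E.apply_symm_apply φ).symm
      rw [hφE, map_sub, hHF, hH'F, sub_self]
    rw [hEq]; exact hH'n
  exact ⟨H, hH1,
    fun t ht => by rw [hHF t, hF_le t ht],
    fun t ht => by rw [hHF t, hF_gt t ht]⟩
end

section
/- Let A be a commutative semisimple complex Banach algebra belonging to the class NP∞ and let ψ be a character of A, with B = ker ψ. Then B again has the Nevanlinna–Pick property: for all pairwise distinct characters φ₁,…,φₙ of A with φᵢ ≠ ψ for every i, and every (a₁,…,aₙ) ∈ ℂⁿ, one has inf{‖x‖_A : x ∈ A, ψ(x) = 0 and φᵢ(x) = aᵢ for all i ∈ {1,…,n}} = max₁≤i≤n |aᵢ|. -/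
open WeakDual

/-- Let `A ∈ NP∞` be a commutative semisimple complex Banach algebra
and `ψ` a character of `A`, with `B = ker ψ`.  Then `B` again has the
Nevanlinna–Pick property: for all pairwise distinct characters `φ₁, …, φₙ` of `A`
different from `ψ` and every `(a₁, …, aₙ) ∈ ℂⁿ`,
`inf {‖x‖ : ψ x = 0 and φᵢ x = aᵢ for all i} = maxᵢ |aᵢ|`. -/
theorem statement7 (A : Type*) [NonUnitalNormedCommRing A] [NormedSpace ℂ A]
    [IsScalarTower ℂ A A] [SMulCommClass ℂ A A] [CompleteSpace A]
    (hsemi : ∀ x : A, x ≠ 0 → ∃ φ : characterSpace ℂ A, φ x ≠ 0)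
    (hNP : MemNPInfty A)
    (ψ : characterSpace ℂ A)
    (n : ℕ) (φ : Fin n → characterSpace ℂ A) (hφ : Function.Injective φ)
    (hne : ∀ i, φ i ≠ ψ) (a : Fin n → ℂ) :
    sInf {r : ℝ | ∃ x : A, (ψ x = 0 ∧ ∀ i, φ i x = a i) ∧ ‖x‖ = r} = ⨆ i, ‖a i‖ := by
  have hinj : Function.Injective (Fin.cons ψ φ : Fin (n + 1) → characterSpace ℂ A) := by
    refine Fin.cons_injective_iff.mpr ⟨?_, hφ⟩
    rintro ⟨i, hi⟩
    exact hne i hi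
  have key := hNP (n + 1) (Fin.cons ψ φ) hinj (Fin.cons 0 a)
  have hset : {r : ℝ | ∃ x : A, (∀ i, (Fin.cons ψ φ : Fin (n+1) → characterSpace ℂ A) i x
        = (Fin.cons 0 a : Fin (n+1) → ℂ) i) ∧ ‖x‖ = r}
      = {r : ℝ | ∃ x : A, (ψ x = 0 ∧ ∀ i, φ i x = a i) ∧ ‖x‖ = r} := by
    ext r
    constructor
    · rintro ⟨x, hx, rfl⟩
      exact ⟨x, ⟨hx 0, fun i => hx i.succ⟩, rfl⟩
    · rintro ⟨x, ⟨h0, hx⟩, rfl⟩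
      refine ⟨x, fun i => ?_, rfl⟩
      refine Fin.cases ?_ (fun j => ?_) i
      · simpa using h0
      · simpa using hx j
  have hsup : (⨆ i : Fin (n+1), ‖(Fin.cons 0 a : Fin (n+1) → ℂ) i‖) = ⨆ i, ‖a i‖ := by
    rcases Nat.eq_zero_or_pos n with rfl | hn
    · have h1 : (⨆ i : Fin (0+1), ‖(Fin.cons 0 a : Fin (0+1) → ℂ) i‖) = 0 := by
        have hz : ∀ i : Fin (0+1), ‖(Fin.cons 0 a : Fin (0+1) → ℂ) i‖ = (0:ℝ) := fun i => by
          have hi : i = 0 := Fin.ext (by omega)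
          simp [hi]
        simp only [hz]
        exact ciSup_const
      rw [h1]
      exact (Real.iSup_of_isEmpty _).symm
    · have hbdd : BddAbove (Set.range fun i => ‖a i‖) := (Set.finite_range _).bddAbove
      have hbdd' : BddAbove (Set.range fun i : Fin (n+1) =>
          ‖(Fin.cons 0 a : Fin (n+1) → ℂ) i‖) := (Set.finite_range _).bddAbove
      have hne' : Nonempty (Fin n) := ⟨⟨0, hn⟩⟩
      apply le_antisymm
      · refine ciSup_le fun i => ?_
        refine Fin.cases ?_ (fun j => ?_) i
        · simp only [Fin.cons_zero, norm_zero]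
          exact le_ciSup_of_le hbdd hne'.some (norm_nonneg _)
        · simpa using le_ciSup hbdd j
      · refine ciSup_le fun i => ?_
        have := le_ciSup hbdd' i.succ
        simpa using this
  rw [hset, hsup] at key
  exact key
end

section
/- Let A be a commutative semisimple complex Banach algebra belonging to the class NP∞ whose Gelfand space Δ(A) is homeomorphic to the ordinal interval [0,γ]; identify Δ(A) with [0,γ] and write x̂(t) for t ∈ [0,γ]. Let (γ_m)_{m∈ℕ} be a strictly increasing sequence of ordinals with γ_m < γ for all m and sup_m γ_m = γ. Assume the interpolation property: for every n ∈ ℕ and every continuous ψ : [0,γ_n] → ℂ with sup_{t ≤ γ_n} |ψ(t)| ≤ 1 there exists h ∈ A with ‖h‖_A ≤ 1 such that ĥ(t) = ψ(t) for t ∈ [0,γ_n] and ĥ(t) = 0 for γ_n < t ≤ γ. Let J be the closure in A of the set {x ∈ A : there exists n ∈ ℕ with x̂(t) = 0 for all t > γ_n}. Then the Gelfand transform restricted to J is an isometric linear bijection from J onto {f ∈ C([0,γ], ℂ) : f(γ) = 0} with the supremum norm; in particular ‖x‖_A = sup_{t ≤ γ} |x̂(t)| for every x ∈ J. -/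
open WeakDual

/-- Let `A ∈ NP∞` be a commutative semisimple complex Banach algebra
whose Gelfand space is (homeomorphic to) the ordinal interval `[0, γ]` via `E`, let
`(γ_m)` be a strictly increasing sequence of ordinals below `γ` with supremum `γ`, and
assume the interpolation property: every continuous `ψ : [0, γ_n] → ℂ` with
`‖ψ‖_∞ ≤ 1` equals `ĥ` on `[0, γ_n]` for some `h ∈ A` with `‖h‖ ≤ 1` and `ĥ = 0` on
`(γ_n, γ]`.  Let `J` be the closure of `{x : ĥx vanishes beyond some γ_n}`.  Then the
Gelfand transform restricted to `J` is an isometric linear bijection from `J` onto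
`{f ∈ C([0,γ], ℂ) : f γ = 0}` with the supremum norm. -/
theorem statement8 (A : Type*) [NonUnitalNormedCommRing A] [NormedSpace ℂ A]
    [IsScalarTower ℂ A A] [SMulCommClass ℂ A A] [CompleteSpace A]
    (hsemi : ∀ x : A, x ≠ 0 → ∃ φ : characterSpace ℂ A, φ x ≠ 0)
    (hNP : MemNPInfty A)
    (γ : Ordinal) (E : Set.Iic γ ≃ₜ characterSpace ℂ A)
    (γm : ℕ → Ordinal) (hmono : StrictMono γm) (hlt : ∀ m, γm m < γ)
    (hsup : (⨆ m, γm m) = γ)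
    (hinterp : ∀ (n : ℕ) (ψ : C(Set.Iic (γm n), ℂ)), (∀ t, ‖ψ t‖ ≤ 1) →
      ∃ h : A, ‖h‖ ≤ 1 ∧
        (∀ (t : Set.Iic γ) (ht : (t : Ordinal) ≤ γm n), E t h = ψ ⟨(t : Ordinal), ht⟩) ∧
        (∀ t : Set.Iic γ, γm n < (t : Ordinal) → E t h = 0))
    (J : Set A)
    (hJ : J = closure {x : A | ∃ n : ℕ, ∀ t : Set.Iic γ, γm n < (t : Ordinal) → E t x = 0}) :
    (∀ x ∈ J, ‖x‖ = ⨆ t : Set.Iic γ, ‖E t x‖) ∧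
    (∀ x ∈ J, E ⟨γ, Set.self_mem_Iic⟩ x = 0) ∧
    (∀ f : C(Set.Iic γ, ℂ), f ⟨γ, Set.self_mem_Iic⟩ = 0 →
      ∃ x ∈ J, ∀ t : Set.Iic γ, E t x = f t) := by
  haveI : Nonempty (Set.Iic γ) := ⟨⟨γ, Set.self_mem_Iic⟩⟩
  set D : Set A := {x : A | ∃ n : ℕ, ∀ t : Set.Iic γ, γm n < (t : Ordinal) → E t x = 0}
    with hDdef
  -- characters are contractive
  have charBound : ∀ (φ : characterSpace ℂ A) (x : A), ‖φ x‖ ≤ ‖x‖ := by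
    intro φ x
    have h1 := hNP 1 (fun _ => φ) (Function.injective_of_subsingleton _) (fun _ => φ x)
    have hsup1 : (⨆ _ : Fin 1, ‖φ x‖) = ‖φ x‖ := ciSup_const
    rw [hsup1] at h1
    rw [← h1]
    apply csInf_le
    · exact ⟨0, fun r hr => by obtain ⟨y, _, hy⟩ := hr; exact hy ▸ norm_nonneg y⟩
    · exact ⟨x, fun _ => rfl, rfl⟩
  have hbddA : ∀ x : A, BddAbove (Set.range fun t : Set.Iic γ => ‖E t x‖) := by
    intro x
    refine ⟨‖x‖, ?_⟩
    rintro r ⟨t, rfl⟩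
    exact charBound _ x
  have hFle : ∀ x : A, (⨆ t : Set.Iic γ, ‖E t x‖) ≤ ‖x‖ := fun x =>
    ciSup_le fun t => charBound _ x
  -- existence of an ordinal index dominating any t < γ
  have hdom : ∀ t : Ordinal, t < γ → ∃ m, t < γm m := by
    intro t ht
    by_contra hc
    push_neg at hc
    exact absurd (hsup ▸ ciSup_le hc) (not_le.mpr ht)
  -- the key interpolation consequence: norm equality on D
  have coreD : ∀ x ∈ D, ‖x‖ = ⨆ t : Set.Iic γ, ‖E t x‖ := by
    intro x hx
    obtain ⟨n, hn⟩ := hx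
    rcases eq_or_ne x 0 with rfl | hx0
    · simp [ciSup_const]
    · set M := ⨆ t : Set.Iic γ, ‖E t x‖ with hM
      have hMpos : 0 < M := by
        obtain ⟨φ, hφ⟩ := hsemi x hx0
        have h2 : ‖φ x‖ ≤ M := by
          have := le_ciSup (hbddA x) (E.symm φ)
          simpa [E.apply_symm_apply] using this
        exact lt_of_lt_of_le (norm_pos_iff.mpr hφ) h2
      have hM0 : (M : ℂ) ≠ 0 := by exact_mod_cast hMpos.ne'
      have hcont : Continuous fun s : Set.Iic (γm n) =>
          (E ⟨s.1, s.2.trans (hlt n).le⟩ x) / (M : ℂ) := by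
        apply Continuous.div_const
        exact ((WeakDual.eval_continuous x).comp continuous_subtype_val).comp
          (E.continuous.comp (Continuous.subtype_mk continuous_subtype_val _))
      obtain ⟨h, hh1, hh2, hh3⟩ := hinterp n ⟨_, hcont⟩ (by
        intro s
        simp only [ContinuousMap.coe_mk]
        rw [norm_div, Complex.norm_real, Real.norm_of_nonneg hMpos.le,
          div_le_one hMpos]
        have := le_ciSup (hbddA x) (⟨s.1, s.2.trans (hlt n).le⟩ : Set.Iic γ)
        exact this)
      have hxh : x = (M : ℂ) • h := by
        by_contra hne'
        obtain ⟨φ, hφ⟩ := hsemi _ (sub_ne_zero.mpr hne')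
        obtain ⟨t, rfl⟩ := E.surjective φ
        apply hφ
        rw [map_sub, map_smul, smul_eq_mul]
        by_cases ht : (t : Ordinal) ≤ γm n
        · rw [hh2 t ht]
          show (E t) x - (M : ℂ) * ((E t) x / (M : ℂ)) = 0
          rw [mul_div_cancel₀ _ hM0, sub_self]
        · rw [hn t (lt_of_not_ge ht), hh3 t (lt_of_not_ge ht), mul_zero, sub_zero]
      refine le_antisymm ?_ (hFle x)
      calc ‖x‖ = ‖(M : ℂ) • h‖ := by rw [← hxh]
        _ = M * ‖h‖ := by
            rw [norm_smul, Complex.norm_real, Real.norm_of_nonneg hMpos.le]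
        _ ≤ M * 1 := by gcongr
        _ = M := mul_one M
  -- the sup function is Lipschitz
  have hcF : Continuous fun y : A => ⨆ t : Set.Iic γ, ‖E t y‖ := by
    have key : ∀ a b : A, (⨆ t : Set.Iic γ, ‖E t a‖) ≤
        (⨆ t : Set.Iic γ, ‖E t b‖) + dist a b := by
      intro a b
      apply ciSup_le
      intro t
      have h1 : ‖(E t) a‖ - ‖(E t) b‖ ≤ ‖(E t) a - (E t) b‖ := norm_sub_norm_le _ _
      have h2 : ‖(E t) a - (E t) b‖ ≤ ‖a - b‖ := by
        rw [← map_sub]; exact charBound _ _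
      have h3 : ‖(E t) b‖ ≤ ⨆ t : Set.Iic γ, ‖E t b‖ := le_ciSup (hbddA b) t
      rw [dist_eq_norm]
      linarith
    have : LipschitzWith 1 (fun y : A => ⨆ t : Set.Iic γ, ‖E t y‖) := by
      apply LipschitzWith.of_dist_le_mul
      intro y z
      rw [NNReal.coe_one, one_mul, Real.dist_eq, abs_sub_le_iff]
      constructor
      · have := key y z; linarith
      · have := key z y; rw [dist_comm] at this; linarith
    exact this.continuous
  have part1 : ∀ x ∈ J, ‖x‖ = ⨆ t : Set.Iic γ, ‖E t x‖ := by
    intro x hx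
    rw [hJ] at hx
    exact (Set.EqOn.closure (fun y hy => coreD y hy) continuous_norm hcF) hx
  have part2 : ∀ x ∈ J, E ⟨γ, Set.self_mem_Iic⟩ x = 0 := by
    intro x hx
    rw [hJ] at hx
    have heq : Set.EqOn (fun y : A => (E ⟨γ, Set.self_mem_Iic⟩) y) (fun _ => (0 : ℂ)) D :=
      fun y hy => by obtain ⟨n, hn⟩ := hy; exact hn _ (hlt n)
    exact (heq.closure (map_continuous _) continuous_const) hx
  refine ⟨part1, part2, ?_⟩
  -- Part 3: surjectivity
  intro f hf
  haveI hcs : CompactSpace (Set.Iic γ) := by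
    have h : Set.Iic γ = Set.Icc 0 γ := by ext t; simp [zero_le]
    rw [h]; exact isCompact_iff_compactSpace.mp isCompact_Icc
  -- scaled interpolation
  have interpS : ∀ (n : ℕ) (C : ℝ), 0 < C → (∀ t : Set.Iic γ, ‖f t‖ ≤ C) →
      ∃ x ∈ D, (∀ t : Set.Iic γ, (t : Ordinal) ≤ γm n → E t x = f t) ∧
        (∀ t : Set.Iic γ, γm n < (t : Ordinal) → E t x = 0) := by
    intro n C hC hfC
    have hcont : Continuous fun s : Set.Iic (γm n) =>
        (f ⟨s.1, s.2.trans (hlt n).le⟩) / (C : ℂ) := by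
      apply Continuous.div_const
      exact f.continuous.comp (Continuous.subtype_mk continuous_subtype_val _)
    obtain ⟨h, hh1, hh2, hh3⟩ := hinterp n ⟨_, hcont⟩ (by
      intro s
      simp only [ContinuousMap.coe_mk]
      rw [norm_div, Complex.norm_real, Real.norm_of_nonneg hC.le, div_le_one hC]
      exact hfC _)
    have hC0 : (C : ℂ) ≠ 0 := by exact_mod_cast hC.ne'
    refine ⟨(C : ℂ) • h, ⟨n, fun t ht => by
      rw [map_smul, smul_eq_mul, hh3 t ht, mul_zero]⟩, fun t ht => ?_,
      fun t ht => by rw [map_smul, smul_eq_mul, hh3 t ht, mul_zero]⟩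
    rw [map_smul, smul_eq_mul, hh2 t ht]
    show (C : ℂ) * ((f t) / (C : ℂ)) = f t
    rw [mul_div_cancel₀ _ hC0]
  -- a bound for f
  obtain ⟨C, hC, hfC⟩ : ∃ C : ℝ, 0 < C ∧ ∀ t : Set.Iic γ, ‖f t‖ ≤ C := by
    obtain ⟨C0, hC0⟩ := (isCompact_range (f.continuous.norm)).bddAbove
    refine ⟨max C0 1, lt_of_lt_of_le one_pos (le_max_right _ _), fun t => ?_⟩
    exact le_trans (hC0 ⟨t, rfl⟩) (le_max_left _ _)
  -- tail smallness
  have heps : ∀ ε : ℝ, 0 < ε → ∃ m : ℕ, ∀ t : Set.Iic γ, γm m < (t : Ordinal) → ‖f t‖ ≤ ε := by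
    intro ε hε
    have hγ : (⟨γ, Set.self_mem_Iic⟩ : Set.Iic γ) ∈ {t : Set.Iic γ | ‖f t‖ < ε} := by
      simp [hf, hε]
    have hnb : {t : Set.Iic γ | ‖f t‖ < ε} ∈ nhds (⟨γ, Set.self_mem_Iic⟩ : Set.Iic γ) :=
      (isOpen_lt f.continuous.norm continuous_const).mem_nhds hγ
    obtain ⟨l, hl, hsub⟩ := exists_Ioc_subset_of_mem_nhds hnb
      ⟨⟨γm 0, (hlt 0).le⟩, Subtype.mk_lt_mk.mpr (hlt 0)⟩
    obtain ⟨m, hm⟩ := hdom l (Subtype.coe_lt_coe.mpr hl)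
    exact ⟨m, fun t ht => (hsub ⟨Subtype.mk_lt_mk.mpr (hm.trans ht), t.2⟩).le⟩
  choose c hc using fun k : ℕ => heps ((1 / 2 : ℝ) ^ k) (by positivity)
  -- strictly increasing indices N with the tail property
  set N : ℕ → ℕ := fun k => Nat.rec (c 0) (fun k ih => max (ih + 1) (c (k + 1))) k with hNdef
  have hNsucc : ∀ k, N (k + 1) = max (N k + 1) (c (k + 1)) := fun k => rfl
  have hNcle : ∀ k, c k ≤ N k := by
    intro k
    cases k with
    | zero => exact le_rfl
    | succ k => rw [hNsucc]; exact le_max_right _ _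
  have hNmono : StrictMono N := strictMono_nat_of_lt_succ fun k => by
    rw [hNsucc]; exact lt_of_lt_of_le (Nat.lt_succ_self _) (le_max_left _ _)
  have hP : ∀ k, ∀ t : Set.Iic γ, γm (N k) < (t : Ordinal) → ‖f t‖ ≤ (1 / 2 : ℝ) ^ k := by
    intro k t ht
    exact hc k t (lt_of_le_of_lt (hmono.monotone (hNcle k)) ht)
  -- the approximating sequence
  choose x hxD hxeq hxzero using fun k : ℕ => interpS (N k) C hC hfC
  have hdiff : ∀ k, ‖x (k + 1) - x k‖ ≤ (1 / 2 : ℝ) ^ k := by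
    intro k
    have hmem : x (k + 1) - x k ∈ D := by
      obtain ⟨n1, h1⟩ := hxD (k + 1)
      obtain ⟨n2, h2⟩ := hxD k
      refine ⟨max n1 n2, fun t ht => ?_⟩
      rw [map_sub, h1 t (lt_of_le_of_lt (hmono.monotone (le_max_left _ _)) ht),
        h2 t (lt_of_le_of_lt (hmono.monotone (le_max_right _ _)) ht), sub_zero]
    rw [coreD _ hmem]
    apply ciSup_le
    intro t
    rw [map_sub]
    by_cases h1 : (t : Ordinal) ≤ γm (N k)
    · have h2 : (t : Ordinal) ≤ γm (N (k + 1)) :=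
        h1.trans (hmono.monotone (hNmono (Nat.lt_succ_self k)).le)
      rw [hxeq (k + 1) t h2, hxeq k t h1, sub_self, norm_zero]
      positivity
    · push_neg at h1
      rw [hxzero k t h1]
      by_cases h2 : (t : Ordinal) ≤ γm (N (k + 1))
      · rw [hxeq (k + 1) t h2, sub_zero]
        exact hP k t h1
      · push_neg at h2
        rw [hxzero (k + 1) t h2, sub_zero, norm_zero]
        positivity
  -- Cauchy, limit
  have hcauchy : CauchySeq x := by
    apply cauchySeq_of_le_geometric (1 / 2 : ℝ) 1 (by norm_num)
    intro k
    rw [dist_eq_norm, one_mul, ← norm_neg, neg_sub]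
    exact hdiff k
  obtain ⟨z, hz⟩ := cauchySeq_tendsto_of_complete hcauchy
  have hzJ : z ∈ J := by
    rw [hJ]
    exact mem_closure_of_tendsto hz (Filter.Eventually.of_forall hxD)
  refine ⟨z, hzJ, ?_⟩
  intro t
  have htend : Filter.Tendsto (fun k => (E t) (x k)) Filter.atTop (nhds ((E t) z)) :=
    ((map_continuous (E t)).continuousAt.tendsto.comp hz)
  have ht2 : (t : Ordinal) ≤ γ := t.2
  rcases lt_or_eq_of_le ht2 with htγ | htγ
  · obtain ⟨m, hm⟩ := hdom t htγ
    have heven : ∀ k ≥ m, (E t) (x k) = f t := by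
      intro k hk
      apply hxeq
      exact le_trans hm.le (hmono.monotone (hk.trans hNmono.le_apply))
    have : Filter.Tendsto (fun k => (E t) (x k)) Filter.atTop (nhds (f t)) := by
      apply Filter.Tendsto.congr' _ tendsto_const_nhds
      filter_upwards [Filter.eventually_ge_atTop m] with k hk
      exact (heven k hk).symm
    exact tendsto_nhds_unique htend this
  · have htt : t = ⟨γ, Set.self_mem_Iic⟩ := Subtype.ext htγ
    rw [htt, hf]
    have heven : ∀ k, (E ⟨γ, Set.self_mem_Iic⟩) (x k) = 0 := fun k =>
      hxzero k _ (hlt (N k))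
    have : Filter.Tendsto (fun k => (E ⟨γ, Set.self_mem_Iic⟩) (x k)) Filter.atTop
        (nhds (0 : ℂ)) := by
      simp only [heven]; exact tendsto_const_nhds
    rw [htt] at htend
    exact tendsto_nhds_unique htend this
end

section
/- Let A be a commutative semisimple unital complex Banach algebra with unit e, whose Gelfand space Δ(A) is homeomorphic to the ordinal interval [0,γ]; identify Δ(A) with [0,γ] and write x̂(t) for t ∈ [0,γ], and let φ_γ be the character corresponding to γ. Let (γ_m)_{m∈ℕ} be a strictly increasing sequence of ordinals with γ_m < γ for all m and sup_m γ_m = γ. Assume: (i) for every n ∈ ℕ, every continuous g : [0,γ_n] ∪ {γ} → ℂ (subspace topology), and every ε > 0, there exists x ∈ A with x̂ = g on [0,γ_n] ∪ {γ} and ‖x‖_A < sup |g| + ε; and (ii) the Gelfand transform maps B = ker φ_γ isometrically onto {f ∈ C([0,γ], ℂ) : f(γ) = 0}, i.e. ‖y‖_A = sup_{t ≤ γ} |ŷ(t)| for y ∈ B and every continuous f on [0,γ] vanishing at γ is ŷ for some y ∈ B. Then ‖x‖_A = sup_{t ≤ γ} |x̂(t)| for every x ∈ A. -/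
open WeakDual

/-- Let `A` be a commutative semisimple unital complex Banach algebra
whose Gelfand space is (homeomorphic to) the ordinal interval `[0, γ]` via `E`, and
let `(γ_m)` be a strictly increasing sequence of ordinals below `γ` with supremum `γ`.
Assume: (i) every continuous `g` on `[0, γ_n] ∪ {γ}` is interpolated by some `x ∈ A`
with `‖x‖ < sup |g| + ε`; (ii) the Gelfand transform maps `B = ker φ_γ` isometrically
onto `{f ∈ C([0,γ], ℂ) : f γ = 0}`.  Then `‖x‖ = sup_{t ≤ γ} |x̂ t|` for all `x ∈ A`. -/
theorem statement9 (A : Type*) [NormedCommRing A] [NormOneClass A] [NormedAlgebra ℂ A]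
    [CompleteSpace A]
    (hsemi : ∀ x : A, x ≠ 0 → ∃ φ : characterSpace ℂ A, φ x ≠ 0)
    (γ : Ordinal) (E : Set.Iic γ ≃ₜ characterSpace ℂ A)
    (γm : ℕ → Ordinal) (hmono : StrictMono γm) (hlt : ∀ m, γm m < γ)
    (hsup : (⨆ m, γm m) = γ)
    (hi : ∀ (n : ℕ)
        (g : C({t : Set.Iic γ // (t : Ordinal) ≤ γm n ∨ (t : Ordinal) = γ}, ℂ))
        (ε : ℝ), 0 < ε →
        ∃ x : A, (∀ t, E t.1 x = g t) ∧ ‖x‖ < (⨆ t, ‖g t‖) + ε)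
    (hii₁ : ∀ y : A, E ⟨γ, Set.self_mem_Iic⟩ y = 0 →
        ‖y‖ = ⨆ t : Set.Iic γ, ‖E t y‖)
    (hii₂ : ∀ f : C(Set.Iic γ, ℂ), f ⟨γ, Set.self_mem_Iic⟩ = 0 →
        ∃ y : A, E ⟨γ, Set.self_mem_Iic⟩ y = 0 ∧ ∀ t : Set.Iic γ, E t y = f t) :
    ∀ x : A, ‖x‖ = ⨆ t : Set.Iic γ, ‖E t x‖ := by
  haveI : Set.OrdConnected (Set.Iic γ) := Set.ordConnected_Iic
  set γpt : Set.Iic γ := ⟨γ, Set.self_mem_Iic⟩ with hγpt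
  haveI : Nonempty (Set.Iic γ) := ⟨γpt⟩
  intro x
  -- basic facts
  have Fc : ∀ a : A, Continuous fun t : Set.Iic γ => (E t) a := fun a =>
    (WeakDual.eval_continuous a).comp (continuous_subtype_val.comp E.continuous)
  have P1 : ∀ (a : A) (t : Set.Iic γ), ‖(E t) a‖ ≤ ‖a‖ := fun a t =>
    AlgHom.norm_apply_le_self (E t) a
  have bdd : ∀ a : A, BddAbove (Set.range fun t : Set.Iic γ => ‖(E t) a‖) := fun a =>
    ⟨‖a‖, by rintro r ⟨t, rfl⟩; exact P1 a t⟩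
  set s : ℝ := ⨆ t : Set.Iic γ, ‖E t x‖ with hs
  have hsle : s ≤ ‖x‖ := ciSup_le fun t => P1 x t
  have hs0 : 0 ≤ s := le_trans (norm_nonneg _) (le_ciSup (bdd x) γpt)
  refine le_antisymm ?_ hsle
  -- threshold lemma
  have thresh : ∀ (a : A) (ε : ℝ), 0 < ε → ∃ m : ℕ, ∀ t : Set.Iic γ,
      γm m < (t : Ordinal) → ‖E t a - E γpt a‖ < ε := by
    intro a ε hε
    have hU : (fun t : Set.Iic γ => (E t) a) ⁻¹' Metric.ball ((E γpt) a) ε ∈ nhds γpt :=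
      (Fc a).continuousAt.preimage_mem_nhds (Metric.ball_mem_nhds _ hε)
    obtain ⟨l, hlγ, hIoc⟩ := exists_Ioc_subset_of_mem_nhds hU
      ⟨⟨γm 0, (hlt 0).le⟩, Subtype.mk_lt_mk.mpr (hlt 0)⟩
    obtain ⟨m, hm⟩ : ∃ m, (l : Ordinal) < γm m := by
      by_contra h
      push_neg at h
      have h2 : (⨆ m, γm m) ≤ (l : Ordinal) := ciSup_le h
      rw [hsup] at h2
      have h3 : (l : Ordinal) < γ := hlγ
      exact absurd (lt_of_le_of_lt h2 h3) (lt_irrefl _)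
    refine ⟨m, fun t ht => ?_⟩
    have htm : t ∈ Set.Ioc l γpt := ⟨show l < t from Subtype.coe_lt_coe.mp (hm.trans ht), t.2⟩
    simpa [dist_eq_norm] using hIoc htm
  -- main estimate : ∀ ε > 0, ‖x‖ ≤ s + 4 ε
  have key : ∀ ε : ℝ, 0 < ε → ‖x‖ ≤ s + 4 * ε := by
    intro ε hε
    -- interpolants
    have hZ : ∀ n : ℕ, ∃ z : A,
        (∀ t : Set.Iic γ, ((t : Ordinal) ≤ γm n ∨ (t : Ordinal) = γ) → E t z = E t x) ∧
        ‖z‖ < s + ε := by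
      intro n
      haveI : Nonempty {t : Set.Iic γ // (t : Ordinal) ≤ γm n ∨ (t : Ordinal) = γ} :=
        ⟨⟨γpt, Or.inr rfl⟩⟩
      obtain ⟨z, hz1, hz2⟩ := hi n
        ⟨fun t => E t.1 x, (Fc x).comp continuous_subtype_val⟩ ε hε
      refine ⟨z, fun t ht => hz1 ⟨t, ht⟩, lt_of_lt_of_le hz2 ?_⟩
      refine add_le_add_left (ciSup_le fun t => ?_) ε
      exact le_ciSup (bdd x) t.1
    choose Z hZ1 hZ2 using hZ
    choose T hT using fun a : A => thresh a ε hε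
    -- recursively defined levels
    let J : ℕ → ℕ := fun j => Nat.rec (T x) (fun _ prev => max (prev + 1) (T (Z prev))) j
    have hJ0 : J 0 = T x := rfl
    have hJs : ∀ j, J (j + 1) = max (J j + 1) (T (Z (J j))) := fun j => rfl
    have hJmono : Monotone J := monotone_nat_of_le_succ fun j => by
      rw [hJs]; exact le_trans (Nat.le_succ _) (le_max_left _ _)
    have c_def : ∀ n : ℕ, E γpt (Z n) = E γpt x := fun n => hZ1 n γpt (Or.inr rfl)
    set c : ℂ := E γpt x with hc
    -- tail estimates
    have tailx : ∀ j (t : Set.Iic γ), γm (J j) < (t : Ordinal) → ‖E t x - c‖ < ε := by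
      intro j t ht
      refine hT x t (lt_of_le_of_lt ?_ ht)
      exact hmono.monotone (hJ0 ▸ hJmono (Nat.zero_le j))
    have tailz : ∀ j (t : Set.Iic γ), γm (J (j + 1)) < (t : Ordinal) →
        ‖E t (Z (J j)) - c‖ < ε := by
      intro j t ht
      have h1 : γm (T (Z (J j))) ≤ γm (J (j + 1)) :=
        hmono.monotone (by rw [hJs]; exact le_max_right _ _)
      have := hT (Z (J j)) t (lt_of_le_of_lt h1 ht)
      rwa [c_def] at this
    set M : ℝ := 2 * s + ε with hM
    have hM0 : 0 ≤ M := by positivity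
    -- the per-term estimate
    set P : ℕ → Set.Iic γ → Prop :=
      fun j t => γm (J j) < (t : Ordinal) ∧ (t : Ordinal) ≤ γm (J (j + 1)) with hP
    have tb : ∀ (j : ℕ) (t : Set.Iic γ),
        ‖E t x - E t (Z (J j))‖ ≤ 2 * ε + (if P j t then M else 0) := by
      intro j t
      by_cases h1 : (t : Ordinal) ≤ γm (J j)
      · rw [hZ1 (J j) t (Or.inl h1)]
        simp only [sub_self, norm_zero]
        positivity
      · by_cases h2 : (t : Ordinal) ≤ γm (J (j + 1))
        · rw [if_pos ⟨not_le.mp h1, h2⟩]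
          calc ‖E t x - E t (Z (J j))‖ ≤ ‖E t x‖ + ‖E t (Z (J j))‖ := norm_sub_le _ _
            _ ≤ s + (s + ε) := add_le_add (le_ciSup (bdd x) t)
                ((P1 _ t).trans (hZ2 (J j)).le)
            _ ≤ 2 * ε + M := by rw [hM]; linarith
        · have h2' := not_le.mp h2
          have e1 := tailx j t (not_le.mp h1)
          have e2 := tailz j t h2'
          calc ‖E t x - E t (Z (J j))‖ ≤ ‖E t x - c‖ + ‖c - E t (Z (J j))‖ := by
                have := norm_sub_le_norm_sub_add_norm_sub (E t x) c (E t (Z (J j)))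
                exact this
            _ ≤ 2 * ε + (if P j t then M else 0) := by
                rw [norm_sub_rev c]
                have : (0:ℝ) ≤ if P j t then M else 0 := by positivity
                linarith
    -- at most one bad j
    have uniq : ∀ (t : Set.Iic γ) (j j' : ℕ), P j t → P j' t → j = j' := by
      intro t j j' hj hj'
      rcases lt_trichotomy j j' with h | h | h
      · exfalso
        have : γm (J (j + 1)) ≤ γm (J j') := hmono.monotone (hJmono h)
        exact absurd (hj.2.trans this) (not_le.mpr hj'.1)
      · exact h
      · exfalso
        have : γm (J (j' + 1)) ≤ γm (J j) := hmono.monotone (hJmono h)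
        exact absurd (hj'.2.trans this) (not_le.mpr hj.1)
    -- choose k and define the average
    obtain ⟨k, hk1, hk2⟩ : ∃ k : ℕ, 1 ≤ k ∧ M / k ≤ ε := by
      refine ⟨max 1 ⌈M / ε⌉₊, le_max_left _ _, ?_⟩
      have hkpos : (0:ℝ) < ((max 1 ⌈M / ε⌉₊ : ℕ) : ℝ) := by
        have : (1:ℕ) ≤ max 1 ⌈M / ε⌉₊ := le_max_left _ _
        exact_mod_cast Nat.lt_of_lt_of_le Nat.zero_lt_one this
      rw [div_le_iff₀ hkpos]
      have h2 : M / ε ≤ ((max 1 ⌈M / ε⌉₊ : ℕ) : ℝ) :=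
        (Nat.le_ceil _).trans (by exact_mod_cast le_max_right 1 ⌈M / ε⌉₊)
      calc M = (M / ε) * ε := by field_simp
        _ ≤ ((max 1 ⌈M / ε⌉₊ : ℕ) : ℝ) * ε := mul_le_mul_of_nonneg_right h2 hε.le
        _ = ε * ((max 1 ⌈M / ε⌉₊ : ℕ) : ℝ) := mul_comm _ _
    have hkC : (k : ℂ) ≠ 0 := Nat.cast_ne_zero.mpr (by omega)
    have hkR : (0:ℝ) < (k : ℝ) := by exact_mod_cast Nat.lt_of_lt_of_le Nat.zero_lt_one hk1
    set v : A := (k : ℂ)⁻¹ • ∑ j ∈ Finset.range k, Z (J j) with hv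
    have hEv : ∀ t : Set.Iic γ, E t v =
        (k : ℂ)⁻¹ * ∑ j ∈ Finset.range k, E t (Z (J j)) := by
      intro t
      rw [hv, map_smul, map_sum]
      simp [smul_eq_mul]
    have hvnorm : ‖v‖ ≤ s + ε := by
      rw [hv, norm_smul]
      have h1 : ‖(k : ℂ)⁻¹‖ = ((k : ℝ))⁻¹ := by simp
      have h2 : ‖∑ j ∈ Finset.range k, Z (J j)‖ ≤ (k : ℝ) * (s + ε) := by
        refine (norm_sum_le _ _).trans ?_
        calc ∑ j ∈ Finset.range k, ‖Z (J j)‖ ≤ ∑ _j ∈ Finset.range k, (s + ε) :=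
              Finset.sum_le_sum fun j _ => (hZ2 (J j)).le
          _ = (k : ℝ) * (s + ε) := by
              rw [Finset.sum_const, Finset.card_range, nsmul_eq_mul]
      rw [h1]
      calc ((k:ℝ))⁻¹ * ‖∑ j ∈ Finset.range k, Z (J j)‖ ≤ ((k:ℝ))⁻¹ * ((k:ℝ) * (s + ε)) := by
            gcongr
        _ = s + ε := by field_simp
    have hEvγ : E γpt v = c := by
      rw [hEv γpt, Finset.sum_congr rfl fun j _ => c_def (J j), Finset.sum_const,
        Finset.card_range, nsmul_eq_mul, inv_mul_cancel_left₀ hkC]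
    have hdiff : ∀ t : Set.Iic γ, ‖E t x - E t v‖ ≤ 2 * ε + M / k := by
      intro t
      have heq : E t x - E t v =
          (k : ℂ)⁻¹ * ∑ j ∈ Finset.range k, (E t x - E t (Z (J j))) := by
        rw [Finset.sum_sub_distrib, mul_sub, hEv t, Finset.sum_const, Finset.card_range,
          nsmul_eq_mul, inv_mul_cancel_left₀ hkC]
      rw [heq, norm_mul]
      have h1 : ‖(k : ℂ)⁻¹‖ = ((k : ℝ))⁻¹ := by simp
      have hind : ∑ j ∈ Finset.range k, (if P j t then M else 0) ≤ M := by
        classical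
        rw [← Finset.sum_filter]
        rw [Finset.sum_const, nsmul_eq_mul]
        have hcard : (((Finset.range k).filter fun j => P j t).card) ≤ 1 := by
          refine Finset.card_le_one.mpr fun a ha b hb => ?_
          exact uniq t a b (Finset.mem_filter.mp ha).2 (Finset.mem_filter.mp hb).2
        calc ((((Finset.range k).filter fun j => P j t).card : ℝ)) * M ≤ 1 * M := by
              refine mul_le_mul_of_nonneg_right ?_ hM0
              exact_mod_cast hcard
          _ = M := one_mul M
      have h2 : ‖∑ j ∈ Finset.range k, (E t x - E t (Z (J j)))‖ ≤ 2 * ε * k + M := by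
        refine (norm_sum_le _ _).trans ?_
        calc ∑ j ∈ Finset.range k, ‖E t x - E t (Z (J j))‖
            ≤ ∑ j ∈ Finset.range k, (2 * ε + if P j t then M else 0) :=
              Finset.sum_le_sum fun j _ => tb j t
          _ = (k : ℝ) * (2 * ε) + ∑ j ∈ Finset.range k, (if P j t then M else 0) := by
              rw [Finset.sum_add_distrib, Finset.sum_const, Finset.card_range, nsmul_eq_mul]
          _ ≤ 2 * ε * k + M := by linarith [hind]
      rw [h1]
      calc ((k:ℝ))⁻¹ * ‖∑ j ∈ Finset.range k, (E t x - E t (Z (J j)))‖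
          ≤ ((k:ℝ))⁻¹ * (2 * ε * k + M) := by gcongr
        _ = 2 * ε + M / k := by field_simp
    have hxv : E γpt (x - v) = 0 := by
      rw [map_sub, hEvγ, hc, sub_self]
    have hnxv : ‖x - v‖ ≤ 2 * ε + M / k := by
      rw [hii₁ (x - v) hxv]
      refine ciSup_le fun t => ?_
      rw [map_sub]
      exact hdiff t
    calc ‖x‖ = ‖v + (x - v)‖ := by rw [add_sub_cancel]
      _ ≤ ‖v‖ + ‖x - v‖ := norm_add_le _ _
      _ ≤ (s + ε) + (2 * ε + M / k) := add_le_add hvnorm hnxv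
      _ ≤ s + 4 * ε := by linarith
  -- conclude
  refine le_of_forall_pos_le_add fun ε hε => ?_
  have := key (ε / 4) (by positivity)
  linarith
end

section
/- Let K be a compact Hausdorff topological space, let A be a closed subalgebra of C(K, ℂ) separating the points of K, let (x_m)_{m∈ℕ} be a sequence of pairwise distinct points of K, and let (a_m)_{m∈ℕ} be complex numbers with Σ_m |a_m| < ∞. Suppose that for all pairwise distinct points y₁,…,yₙ ∈ K and every (c₁,…,cₙ) ∈ ℂⁿ one has inf{‖f‖_∞ : f ∈ A, f(yᵢ) = cᵢ for all i} = max₁≤i≤n |cᵢ|. If Σ_{m} a_m f(x_m) = 0 for every f ∈ A, then a_m = 0 for every m. -/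
/-- Let `K` be a compact Hausdorff space, let `A` be a closed
subalgebra of `C(K, ℂ)` separating the points of `K`, let `(x_m)` be pairwise distinct
points of `K` and `(a_m)` complex numbers with `Σ |a_m| < ∞`.  Suppose all
Nevanlinna–Pick norms of `A` at point evaluations are supremum norms.  If
`Σ_m a_m · f (x_m) = 0` for every `f ∈ A`, then `a_m = 0` for every `m`. -/
theorem statement11 (K : Type*) [TopologicalSpace K] [CompactSpace K] [T2Space K]
    (A : Subalgebra ℂ C(K, ℂ)) (hclosed : IsClosed (A : Set C(K, ℂ)))
    (hsep : ∀ x y : K, x ≠ y → ∃ f ∈ A, f x ≠ f y)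
    (x : ℕ → K) (hx : Function.Injective x)
    (a : ℕ → ℂ) (ha : Summable fun m => ‖a m‖)
    (hNP : ∀ (n : ℕ) (y : Fin n → K), Function.Injective y → ∀ c : Fin n → ℂ,
      sInf {r : ℝ | ∃ f : C(K, ℂ), f ∈ A ∧ (∀ i, f (y i) = c i) ∧ ‖f‖ = r}
        = ⨆ i, ‖c i‖)
    (hzero : ∀ f : C(K, ℂ), f ∈ A → ∑' m, a m * f (x m) = 0) :
    ∀ m, a m = 0 := by
  intro m₀
  have key : ∀ ε : ℝ, 0 < ε → ‖a m₀‖ ≤ ε := by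
    intro ε hε
    -- choose n so that the tail is small
    have htail := tendsto_sum_nat_add (fun m => ‖a m‖)
    have hev : ∀ᶠ i in Filter.atTop,
        (∑' k, ‖a (k + i)‖) < ε / 2 := htail.eventually (gt_mem_nhds (by linarith))
    obtain ⟨n, hn1, hn2⟩ := (hev.and (Filter.eventually_ge_atTop (m₀ + 1))).exists
    have hm₀n : m₀ < n := hn2
    -- set up interpolation data
    set y : Fin n → K := fun i => x i with hy
    have hyinj : Function.Injective y := fun i j h => Fin.ext (hx h)
    set c : Fin n → ℂ := fun i => if (i : ℕ) = m₀ then (1 : ℂ) else 0 with hc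
    haveI : Nonempty (Fin n) := ⟨⟨m₀, hm₀n⟩⟩
    have hsup : (⨆ i, ‖c i‖) = 1 := by
      apply le_antisymm
      · apply ciSup_le
        intro i
        simp only [hc]
        split_ifs <;> simp
      · have := le_ciSup (f := fun i => ‖c i‖)
          (Set.Finite.bddAbove (Set.finite_range _)) ⟨m₀, hm₀n⟩
        simpa [hc] using this
    have hsInf := hNP n y hyinj c
    rw [hsup] at hsInf
    set S : Set ℝ := {r : ℝ | ∃ f : C(K, ℂ), f ∈ A ∧ (∀ i, f (y i) = c i) ∧ ‖f‖ = r}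
      with hS
    have hbdd : BddBelow S := ⟨0, fun r hr => by
      obtain ⟨f, _, _, hf⟩ := hr; rw [← hf]; positivity⟩
    have hne : S.Nonempty := by
      by_contra h
      rw [Set.not_nonempty_iff_eq_empty] at h
      rw [h, Real.sInf_empty] at hsInf
      norm_num at hsInf
    have hlt : sInf S < 2 := by rw [hsInf]; norm_num
    obtain ⟨r, ⟨f, hfA, hfy, hfr⟩, hr2⟩ := (csInf_lt_iff hbdd hne).mp hlt
    have hfnorm : ‖f‖ < 2 := hfr ▸ hr2
    -- summability
    have hg : Summable (fun m => a m * f (x m)) := by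
      apply Summable.of_norm_bounded (ha.mul_right ‖f‖)
      intro m
      rw [norm_mul]
      exact mul_le_mul_of_nonneg_left (f.norm_coe_le_norm _) (norm_nonneg _)
    have hsplit := Summable.sum_add_tsum_nat_add (f := fun m => a m * f (x m)) n hg
    rw [hzero f hfA] at hsplit
    have hfin : ∑ i ∈ Finset.range n, a i * f (x i) = a m₀ := by
      have hterm : ∀ i ∈ Finset.range n, a i * f (x i)
          = if i = m₀ then a m₀ else 0 := by
        intro i hi
        have hi' := Finset.mem_range.mp hi
        have h2 := hfy ⟨i, hi'⟩
        simp only [hy, hc] at h2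
        rw [h2]
        split_ifs with h <;> simp [h]
      rw [Finset.sum_congr rfl hterm, Finset.sum_ite_eq' (Finset.range n) m₀]
      simp [hm₀n]
    rw [hfin] at hsplit
    have hval : a m₀ = -∑' k, a (k + n) * f (x (k + n)) :=
      eq_neg_of_add_eq_zero_left hsplit
    have hta : Summable (fun k => ‖a (k + n)‖) := (summable_nat_add_iff n).mpr ha
    have hbound : ∀ k : ℕ, ‖a (k + n) * f (x (k + n))‖ ≤ ‖a (k + n)‖ * 2 := by
      intro k
      rw [norm_mul]
      exact mul_le_mul (le_refl _) ((f.norm_coe_le_norm _).trans hfnorm.le)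
        (norm_nonneg _) (norm_nonneg _)
    have hsn : Summable (fun k => ‖a (k + n) * f (x (k + n))‖) :=
      Summable.of_nonneg_of_le (fun _ => norm_nonneg _) hbound (hta.mul_right 2)
    calc ‖a m₀‖ = ‖∑' k, a (k + n) * f (x (k + n))‖ := by rw [hval, norm_neg]
      _ ≤ ∑' k, ‖a (k + n) * f (x (k + n))‖ := norm_tsum_le_tsum_norm hsn
      _ ≤ ∑' k, ‖a (k + n)‖ * 2 := Summable.tsum_le_tsum hbound hsn (hta.mul_right 2)
      _ = (∑' k, ‖a (k + n)‖) * 2 := tsum_mul_right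
      _ ≤ (ε / 2) * 2 := by nlinarith [hn1]
      _ = ε := by ring
  by_contra h
  have h1 : 0 < ‖a m₀‖ := norm_pos_iff.mpr h
  have := key (‖a m₀‖ / 2) (by linarith)
  linarith
end

section
/- Let A be a commutative semisimple complex Banach algebra belonging to the class NP∞. Then A has only trivial Gleason parts: for any two distinct characters φ, ψ of A, one has ‖φ − ψ‖_{A*} = 2, where ‖·‖_{A*} denotes the norm in the dual space of A. -/
open WeakDual

set_option maxHeartbeats 1000000 in
/-- Let `A ∈ NP∞` be a commutative semisimple complex Banach
algebra.  Then `A` has only trivial Gleason parts: for any two distinct characters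
`φ, ψ` of `A` one has `‖φ - ψ‖_{A*} = 2`, the norm being taken in the dual space
of `A`. -/
theorem statement13 (A : Type*) [NonUnitalNormedCommRing A] [NormedSpace ℂ A]
    [IsScalarTower ℂ A A] [SMulCommClass ℂ A A] [CompleteSpace A]
    (hsemi : ∀ x : A, x ≠ 0 → ∃ φ : characterSpace ℂ A, φ x ≠ 0)
    (hNP : MemNPInfty A)
    (φ ψ : characterSpace ℂ A) (hne : φ ≠ ψ) :
    ‖WeakDual.toStrongDual (φ : WeakDual ℂ A)
        - WeakDual.toStrongDual (ψ : WeakDual ℂ A)‖ = 2 := by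
  set Φ := WeakDual.toStrongDual (φ : WeakDual ℂ A)
        - WeakDual.toStrongDual (ψ : WeakDual ℂ A) with hΦ
  have hΦapp : ∀ x : A, Φ x = φ x - ψ x := fun x => rfl
  -- every character is contractive, via the n = 1 case of NP∞
  have hle : ∀ (χ : characterSpace ℂ A) (x : A), ‖χ x‖ ≤ ‖x‖ := by
    intro χ x
    have h := hNP 1 ![χ] (Function.injective_of_subsingleton _) ![χ x]
    have hsup : (⨆ i : Fin 1, ‖(![χ x] : Fin 1 → ℂ) i‖) = ‖χ x‖ := by
      rw [ciSup_unique]; simp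
    have hbdd : BddBelow {r : ℝ | ∃ y : A, (∀ i, (![χ] : Fin 1 → characterSpace ℂ A) i y
        = ![χ x] i) ∧ ‖y‖ = r} := by
      refine ⟨0, fun r hr => ?_⟩
      obtain ⟨y, _, hy⟩ := hr
      exact hy ▸ norm_nonneg y
    have hmem : ‖x‖ ∈ {r : ℝ | ∃ y : A, (∀ i, (![χ] : Fin 1 → characterSpace ℂ A) i y
        = ![χ x] i) ∧ ‖y‖ = r} := ⟨x, fun i => by fin_cases i; simp, rfl⟩
    calc ‖χ x‖ = sInf _ := by rw [h, hsup]
      _ ≤ ‖x‖ := csInf_le hbdd hmem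
  have hΦle : ‖Φ‖ ≤ 2 := by
    refine ContinuousLinearMap.opNorm_le_bound _ (by norm_num) (fun x => ?_)
    rw [hΦapp]
    have := norm_sub_le ((φ : characterSpace ℂ A) x) ((ψ : characterSpace ℂ A) x)
    have h1 := hle φ x
    have h2 := hle ψ x
    linarith
  refine le_antisymm hΦle ?_
  -- the n = 2 case with values (1, -1)
  have hinj : Function.Injective (![φ, ψ] : Fin 2 → characterSpace ℂ A) := by
    intro i j h
    fin_cases i <;> fin_cases j <;> simp_all
  have h2 := hNP 2 ![φ, ψ] hinj ![1, -1]
  have hsup : (⨆ i : Fin 2, ‖(![(1 : ℂ), -1] : Fin 2 → ℂ) i‖) = 1 := by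
    refine le_antisymm (ciSup_le fun i => ?_) ?_
    · fin_cases i <;> simp
    · calc (1 : ℝ) = ‖(![(1 : ℂ), -1] : Fin 2 → ℂ) 0‖ := by simp
        _ ≤ _ := le_ciSup (f := fun i : Fin 2 => ‖(![(1 : ℂ), -1] : Fin 2 → ℂ) i‖)
          (Set.Finite.bddAbove (Set.finite_range _)) (0 : Fin 2)
  rw [hsup] at h2
  set S := {r : ℝ | ∃ x : A, (∀ i, (![φ, ψ] : Fin 2 → characterSpace ℂ A) i x
      = ![(1 : ℂ), -1] i) ∧ ‖x‖ = r} with hS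
  have hSne : S.Nonempty := by
    by_contra hS0
    rw [Set.not_nonempty_iff_eq_empty] at hS0
    rw [hS0, Real.sInf_empty] at h2
    norm_num at h2
  refine le_of_forall_pos_le_add (fun ε hε => ?_)
  obtain ⟨r, hrS, hrlt⟩ := Real.lt_sInf_add_pos hSne (half_pos hε)
  obtain ⟨x, hx, hxr⟩ := hrS
  have hx0 : (φ : characterSpace ℂ A) x = 1 := by have := hx 0; simpa using this
  have hx1 : (ψ : characterSpace ℂ A) x = -1 := by have := hx 1; simpa using this
  have hΦx : ‖Φ x‖ = 2 := by
    rw [hΦapp, hx0, hx1]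
    norm_num
  have hb : ‖Φ x‖ ≤ ‖Φ‖ * ‖x‖ := Φ.le_opNorm x
  rw [hΦx] at hb
  have hxle : ‖x‖ ≤ 1 + ε / 2 := by
    rw [hxr, h2] at *
    linarith [hrlt]
  have hΦ0 : (0 : ℝ) ≤ ‖Φ‖ := norm_nonneg _
  nlinarith [mul_le_mul_of_nonneg_left hxle hΦ0]
end
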